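/- arXiv:2603.02400 — 4 statements merged into one kernel-verified Lean document; each statement's English description precedes it below -/
import Mathlib

section
/- Let R be a set of requests on a bidirected tree T rooted at a vertex z, with R^-, R^+, R^∨ the sets of converging, diverging and unimodal requests of R. Then χ(R,T) ≤ ω(R^+,T) + ω(R^-,T) + ω(R^∨,T) ≤ 2·χ(R,T). -/
open SimpleGraph

/-- A request in a bidirected tree `T`: a directed path of length at least 1,
encoded as a path (walk without vertex repetition) in the underlying tree. -/
structure Request {V : Type*} (T : SimpleGraph V) where
  s : V
  t : V
  toWalk : T.Walk s t
  isPath : toWalk.IsPath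
  one_le_length : 1 ≤ toWalk.length

namespace Request

variable {V : Type*} {T : SimpleGraph V}

/-- The second vertex `s_r⁺` of a request. -/
def sPlus (r : Request T) : V := r.toWalk.getVert 1

/-- The penultimate vertex `t_r⁻` of a request. -/
def tMinus (r : Request T) : V := r.toWalk.getVert (r.toWalk.length - 1)

end Request

variable {V : Type*}

/-- `r` interferes on `r'` if the unique path from `s_r` to `t_{r'}` in the tree `T`
has first arc the emission arc of `r` and last arc the reception arc of `r'`. -/
def InterferesOn (T : SimpleGraph V) (r r' : Request T) : Prop :=
  ∃ p : T.Walk r.s r'.t, p.IsPath ∧ 1 ≤ p.length ∧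
    p.getVert 1 = r.sPlus ∧ p.getVert (p.length - 1) = r'.tMinus

/-- Two requests interfere if one of them interferes on the other. -/
def Interfere (T : SimpleGraph V) (r r' : Request T) : Prop :=
  InterferesOn T r r' ∨ InterferesOn T r' r

/-- `x` is an ancestor of `y` in the tree `T` rooted at `z`:
`x` lies on the unique path from `z` to `y`. -/
def Ancestor (T : SimpleGraph V) (z x y : V) : Prop :=
  ∃ p : T.Walk z y, p.IsPath ∧ x ∈ p.support

/-- Two vertices are related if one is an ancestor of the other. -/
def Related (T : SimpleGraph V) (z x y : V) : Prop :=
  Ancestor T z x y ∨ Ancestor T z y x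

/-- A request is converging (w.r.t. root `z`) if all its arcs are directed towards `z`,
i.e. the head of every arc is an ancestor of its tail. -/
def Converging (T : SimpleGraph V) (z : V) (r : Request T) : Prop :=
  ∀ i < r.toWalk.length, Ancestor T z (r.toWalk.getVert (i+1)) (r.toWalk.getVert i)

/-- A request is diverging (w.r.t. root `z`) if all its arcs are directed away from `z`,
i.e. the tail of every arc is an ancestor of its head. -/
def Diverging (T : SimpleGraph V) (z : V) (r : Request T) : Prop :=
  ∀ i < r.toWalk.length, Ancestor T z (r.toWalk.getVert i) (r.toWalk.getVert (i+1))

/-- A request is unimodal (w.r.t. root `z`) if it is neither converging nor diverging. -/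
def Unimodal (T : SimpleGraph V) (z : V) (r : Request T) : Prop :=
  ¬ Converging T z r ∧ ¬ Diverging T z r

/-- `m` is the middle of the request `r` (w.r.t. root `z`): the vertex of `r`
closest to the root, i.e. the vertex of `r` which is an ancestor of every vertex of `r`. -/
def IsMiddle (T : SimpleGraph V) (z : V) (r : Request T) (m : V) : Prop :=
  m ∈ r.toWalk.support ∧ ∀ y ∈ r.toWalk.support, Ancestor T z m y

/-- The interference graph of a family of requests: two (indices of) requests are
adjacent iff they are distinct and the requests interfere. -/
def interferenceGraph (T : SimpleGraph V) {ι : Type*} (f : ι → Request T) :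
    SimpleGraph ι where
  Adj i j := i ≠ j ∧ Interfere T (f i) (f j)
  symm := by
    constructor
    intro i j h
    exact ⟨h.1.symm, h.2.symm⟩
  loopless := by
    constructor
    intro i h
    exact h.1 rfl

/-- The interference graph of a set of requests. -/
def interGraph (T : SimpleGraph V) (R : Set (Request T)) : SimpleGraph ↥R :=
  interferenceGraph T (fun r => (r : Request T))

/-- The pair `(a, b)` is an arc joining two consecutive vertices of the
bidirected path corresponding to the walk `p` (in either direction). -/
def ArcOn (T : SimpleGraph V) {u v : V} (p : T.Walk u v) (a b : V) : Prop :=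
  ∃ j < p.length, (p.getVert j = a ∧ p.getVert (j+1) = b) ∨
    (p.getVert j = b ∧ p.getVert (j+1) = a)

/-- The request `r` shares an arc with the bidirected path corresponding to
the walk `p`. -/
def SharesArc (T : SimpleGraph V) {u v : V} (p : T.Walk u v) (r : Request T) : Prop :=
  ∃ i < r.toWalk.length, ArcOn T p (r.toWalk.getVert i) (r.toWalk.getVert (i+1))

/-- A leaf of a tree: a vertex with at most one neighbour. -/
def IsLeaf (T : SimpleGraph V) (y : V) : Prop :=
  {w | T.Adj y w}.Subsingleton

/-- A comparability graph: there is a partial order on the vertices such that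
two distinct vertices are adjacent iff they are comparable. -/
def IsComparabilityGraph {α : Type*} (G : SimpleGraph α) : Prop :=
  ∃ le : α → α → Prop, IsPartialOrder α le ∧ ∀ a b, G.Adj a b ↔ a ≠ b ∧ (le a b ∨ le b a)

/-- A cobipartite graph: the vertex set can be partitioned into two cliques. -/
def IsCobipartite {α : Type*} (G : SimpleGraph α) : Prop :=
  ∃ A : Set α, G.IsClique A ∧ G.IsClique Aᶜ

/-!
Rooting the tree at `z` makes "is an ancestor of" a partial order along which every path first
climbs towards `z` and then descends. Whether `r` interferes on `r'` then depends only on the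
directions of the emission arc of `r` and of the reception arc of `r'`. Among converging (resp.
diverging) requests interference becomes an ancestor relation that is transitive along depth, so
these interference graphs are comparability graphs; two unimodal requests fail to interfere only
when their two top arcs are swapped, so the unimodal interference graph is cobipartite. Both kinds
of graphs satisfy `χ = ω` (Mirsky, and König through Hall's theorem), and colouring the three
classes with disjoint palettes gives `χ(R) ≤ ω(R⁺) + ω(R⁻) + ω(R^∨)`. Conversely, a converging,
a diverging and a unimodal request never pairwise fail to interfere, so a colour class of an
optimal colouring meets at most two of three maximum cliques of the classes, whence
`ω(R⁺) + ω(R⁻) + ω(R^∨) ≤ 2χ(R)`.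
-/

open Finset

section ComparabilityGraph

variable {α : Type*} {G : SimpleGraph α}

theorem isComparabilityGraph_of_adj_trans [Finite α] {κ : Type*} [LinearOrder κ] (f : α → κ)
    (h : ∀ ⦃a b c⦄, G.Adj a b → G.Adj b c → a ≠ c → f a ≤ f b → f b ≤ f c → G.Adj a c) :
    IsComparabilityGraph G := by
  let key : α → κ ×ₗ Fin (Nat.card α) := fun a => toLex (f a, Finite.equivFin α a)
  have hkey : ∀ {a b}, key a < key b → f a ≤ f b := fun hab => by
    rcases Prod.Lex.toLex_lt_toLex.1 hab with h | h
    exacts [h.le, h.1.le]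
  have hinj : Function.Injective key := fun a b hab =>
    (Finite.equivFin α).injective (congrArg (fun x => (ofLex x).2) hab)
  refine ⟨fun a b => a = b ∨ (G.Adj a b ∧ key a < key b),
    { refl := fun a => Or.inl rfl, trans := ?_, antisymm := ?_ }, fun a b => ?_⟩
  · rintro a b c (rfl | ⟨hab, kab⟩) (rfl | ⟨hbc, kbc⟩)
    · exact Or.inl rfl
    · exact Or.inr ⟨hbc, kbc⟩
    · exact Or.inr ⟨hab, kab⟩
    · exact Or.inr ⟨h hab hbc (fun hac => (kab.trans kbc).ne (congrArg key hac)) (hkey kab)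
        (hkey kbc), kab.trans kbc⟩
  · rintro a b (rfl | ⟨-, kab⟩) (hba | ⟨-, kba⟩)
    · rfl
    · rfl
    · exact hba.symm
    · exact absurd (kab.trans kba) (lt_irrefl _)
  · constructor
    · intro hab
      exact ⟨G.ne_of_adj hab, (lt_or_gt_of_ne (hinj.ne (G.ne_of_adj hab))).imp
        (fun k => Or.inr ⟨hab, k⟩) (fun k => Or.inr ⟨hab.symm, k⟩)⟩
    · rintro ⟨hne, (rfl | ⟨hab, -⟩) | (rfl | ⟨hba, -⟩)⟩
      exacts [absurd rfl hne, hab, absurd rfl hne, hba.symm]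

/-- Mirsky's theorem: colour every vertex by its height in the partial order. -/
theorem IsComparabilityGraph.colorable_cliqueNum [Finite α] (hG : IsComparabilityGraph G) :
    G.Colorable G.cliqueNum := by
  classical
  obtain ⟨le, hle, hadj⟩ := hG
  let _ : PartialOrder α :=
    { le := le, le_refl := hle.refl, le_trans := fun _ _ _ => hle.trans _ _ _,
      le_antisymm := fun _ _ => hle.antisymm _ _ }
  have hadj_of_lt : ∀ {a b : α}, a < b → G.Adj a b := fun hab =>
    (hadj _ _).2 ⟨hab.ne, Or.inl hab.le⟩
  have hheight : ∀ a : α, Order.height a < G.cliqueNum := by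
    intro a
    by_contra! h
    obtain ⟨p, -, hp⟩ := Order.exists_series_of_le_height a h
    have hclique : G.IsClique (univ.image p.toFun : Set α) := by
      simp only [coe_image, coe_univ, Set.image_univ]
      rintro _ ⟨i, rfl⟩ _ ⟨j, rfl⟩ hij
      rcases lt_or_gt_of_ne (fun h : i = j => hij (h ▸ rfl)) with h | h
      exacts [hadj_of_lt (p.strictMono h), (hadj_of_lt (p.strictMono h)).symm]
    have := hclique.card_le_cliqueNum
    rw [card_image_of_injective _ p.strictMono.injective, card_univ,
      Fintype.card_fin, hp] at this
    omega
  have hfin : ∀ a : α, ∃ n : ℕ, Order.height a = n ∧ n < G.cliqueNum := fun a => by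
    obtain ⟨n, hn⟩ := ENat.ne_top_iff_exists.1 ((hheight a).trans (ENat.natCast_lt_top _)).ne
    exact ⟨n, hn.symm, by exact_mod_cast hn ▸ hheight a⟩
  choose ht hht hlt using hfin
  have hmono : StrictMono ht := fun a b hab => by
    have := Order.height_strictMono hab (by rw [hht]; exact ENat.natCast_lt_top _)
    rwa [hht, hht, Nat.cast_lt] at this
  refine ⟨Coloring.mk (fun a => ⟨ht a, hlt a⟩) fun {a b} hab heq => ?_⟩
  obtain ⟨hne, hab | hba⟩ := (hadj a b).1 hab
  exacts [(hmono (lt_of_le_of_ne hab hne)).ne (congrArg Fin.val heq),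
    (hmono (lt_of_le_of_ne hba hne.symm)).ne' (congrArg Fin.val heq)]

end ComparabilityGraph

section CobipartiteGraph

variable {α : Type*} {G : SimpleGraph α}

/-- Hall's theorem with deficiency `d`, obtained by adding `d` common new elements to every
`N a`. -/
theorem exists_injective_disjSum_of_card_le_card_biUnion_add {ι κ : Type*} [DecidableEq κ]
    (A : Finset ι) (N : ι → Finset κ) (d : ℕ) (h : ∀ S ⊆ A, #S ≤ #(S.biUnion N) + d) :
    ∃ g : A → κ ⊕ Fin d, Function.Injective g ∧ ∀ a : A, g a ∈ (N a).disjSum univ := by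
  classical
  let t : A → Finset (κ ⊕ Fin d) := fun a => (N a).disjSum univ
  refine (all_card_le_biUnion_card_iff_exists_injective t).1 fun s => ?_
  rcases s.eq_empty_or_nonempty with rfl | ⟨a₀, ha₀⟩
  · simp
  let S : Finset ι := s.map (Function.Embedding.subtype _)
  have hsub : (S.biUnion N).disjSum univ ⊆ s.biUnion t := by
    rintro (b | i) hx
    · obtain ⟨a, ha, hb⟩ := mem_biUnion.1 (inl_mem_disjSum.1 hx)
      obtain ⟨a, has, rfl⟩ := mem_map.1 ha
      exact mem_biUnion.2 ⟨a, has, inl_mem_disjSum.2 hb⟩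
    · exact mem_biUnion.2 ⟨a₀, ha₀, inr_mem_disjSum.2 (mem_univ i)⟩
  calc #s = #S := (card_map _).symm
    _ ≤ #(S.biUnion N) + d := h S fun x hx => by
      obtain ⟨a, -, rfl⟩ := mem_map.1 hx
      exact a.2
    _ = #((S.biUnion N).disjSum univ) := by rw [card_disjSum, card_univ, Fintype.card_fin]
    _ ≤ _ := card_le_card hsub

/-- Each vertex of `A` takes the colour of its partner in a deficient matching into the
non-neighbours outside `A`, or one of `d` extra colours. -/
theorem colorable_of_card_le_card_biUnion_add [Fintype α] [DecidableEq α] (A : Finset α)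
    (N : α → Finset α) (hN : ∀ a ∈ A, ∀ b ∈ N a, b ∉ A ∧ ¬ G.Adj a b) (d : ℕ)
    (h : ∀ S ⊆ A, #S ≤ #(S.biUnion N) + d) : G.Colorable (#Aᶜ + d) := by
  obtain ⟨g, hg, hgN⟩ := exists_injective_disjSum_of_card_le_card_biUnion_add A N d h
  let c : α → α ⊕ Fin d := fun x => if hx : x ∈ A then g ⟨x, hx⟩ else .inl x
  have hc : ∀ x, c x ∈ Aᶜ.disjSum (univ : Finset (Fin d)) := by
    intro x
    by_cases hx : x ∈ A
    · have := hgN ⟨x, hx⟩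
      simp only [c, hx, dite_true]
      rcases hgx : g ⟨x, hx⟩ with b | i
      · rw [hgx] at this
        exact inl_mem_disjSum.2 (mem_compl.2 (hN x hx b (inl_mem_disjSum.1 this)).1)
      · exact inr_mem_disjSum.2 (mem_univ i)
    · simp [c, hx]
  have hvalid : ∀ {x y}, G.Adj x y → c x ≠ c y := by
    intro x y hxy hcxy
    by_cases hx : x ∈ A <;> by_cases hy : y ∈ A <;>
      simp only [c, hx, hy, dite_true, dite_false] at hcxy
    · exact G.ne_of_adj hxy (congrArg Subtype.val (hg hcxy))
    · have := hgN ⟨x, hx⟩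
      rw [hcxy] at this
      exact (hN x hx y (inl_mem_disjSum.1 this)).2 hxy
    · have := hgN ⟨y, hy⟩
      rw [← hcxy] at this
      exact (hN y hy x (inl_mem_disjSum.1 this)).2 hxy.symm
    · exact G.ne_of_adj hxy (Sum.inl_injective hcxy)
  have C : G.Coloring (Aᶜ.disjSum (univ : Finset (Fin d))) :=
    Coloring.mk (fun x => ⟨c x, hc x⟩) fun hxy hcxy => hvalid hxy (congrArg Subtype.val hcxy)
  simpa [card_disjSum] using C.colorable

theorem isClique_union_sdiff_biUnion [DecidableEq α] {S B : Finset α} {N : α → Finset α}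
    (hS : G.IsClique (S : Set α)) (hB : G.IsClique (B : Set α))
    (hN : ∀ a ∈ S, ∀ b ∈ B, b ∉ N a → G.Adj a b) :
    G.IsClique ((S ∪ (B \ S.biUnion N) : Finset α) : Set α) := by
  intro x hx y hy hxy
  simp only [coe_union, coe_sdiff, Set.mem_union, Set.mem_sdiff, mem_coe, mem_biUnion,
    not_exists, not_and] at hx hy
  rcases hx with hx | ⟨hxB, hxN⟩ <;> rcases hy with hy | ⟨hyB, hyN⟩
  · exact hS hx hy hxy
  · exact hN x hx y hyB (hyN x hx)
  · exact (hN y hy x hxB (hxN y hy)).symm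
  · exact hB hxB hyB hxy

/-- König's theorem, complemented. Let `N(S)` be the set of non-neighbours of `S ⊆ A` outside `A`.
For `S` maximising the clique `S ∪ (Aᶜ \ N(S))`, the excess of its size over `#Aᶜ` bounds the
deficiency in Hall's condition, and Hall's theorem with that deficiency uses as many colours. -/
theorem IsCobipartite.colorable_cliqueNum [Finite α] (hG : IsCobipartite G) :
    G.Colorable G.cliqueNum := by
  classical
  have := Fintype.ofFinite α
  obtain ⟨A, hA, hB⟩ := hG
  lift A to Finset α using A.toFinite
  rw [← coe_compl] at hB
  let N : α → Finset α := fun a => Aᶜ.filter (¬ G.Adj a ·)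
  let K : Finset α → Finset α := fun S => S ∪ (Aᶜ \ S.biUnion N)
  have hNA : ∀ S : Finset α, S.biUnion N ⊆ Aᶜ := fun S =>
    biUnion_subset.2 fun _ _ => filter_subset _ _
  have hK : ∀ S ⊆ A, #(K S) + #(S.biUnion N) = #S + #Aᶜ := fun S hS => by
    rw [card_union_of_disjoint (disjoint_of_subset_left hS (disjoint_of_subset_right sdiff_subset
      disjoint_compl_right)), card_sdiff_of_subset (hNA S)]
    have := card_le_card (hNA S)
    omega
  obtain ⟨S, hSA, hSmax⟩ := A.powerset.exists_max_image (fun S => #(K S)) ⟨∅, empty_mem_powerset _⟩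
  have hK₀ := hSmax ∅ (empty_mem_powerset _)
  have hK₀' : #(K ∅) = #Aᶜ := by simp [K]
  have hclique : #(K S) ≤ G.cliqueNum :=
    (isClique_union_sdiff_biUnion (hA.subset (mem_powerset.1 hSA)) hB fun a _ b hb hbN => by
      by_contra hab
      exact hbN (mem_filter.2 ⟨hb, hab⟩)).card_le_cliqueNum
  refine (colorable_of_card_le_card_biUnion_add A N (fun a _ b hb => ?_) (#(K S) - #Aᶜ)
    fun S' hS' => ?_).mono (by omega)
  · exact ⟨mem_compl.1 (mem_filter.1 hb).1, (mem_filter.1 hb).2⟩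
  · have := hK S' hS'
    have := hSmax S' (mem_powerset.2 hS')
    omega

end CobipartiteGraph

theorem SimpleGraph.Colorable.card_add_card_add_card_le_two_mul {α : Type*} {G : SimpleGraph α}
    {n : ℕ} (hG : G.Colorable n) {K₁ K₂ K₃ : Finset α} (h₁ : G.IsClique (K₁ : Set α))
    (h₂ : G.IsClique (K₂ : Set α)) (h₃ : G.IsClique (K₃ : Set α))
    (h : ∀ a ∈ K₁, ∀ b ∈ K₂, ∀ c ∈ K₃, G.Adj a b ∨ G.Adj a c ∨ G.Adj b c) :
    #K₁ + #K₂ + #K₃ ≤ 2 * n := by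
  classical
  obtain ⟨C⟩ := hG
  have hfiber : ∀ {K : Finset α}, G.IsClique (K : Set α) → ∀ q, #{a ∈ K | C a = q} ≤ 1 :=
    fun hK q => card_le_one.2 fun a ha b hb => by
      rw [mem_filter] at ha hb
      by_contra hab
      exact C.valid (hK ha.1 hb.1 hab) (ha.2.trans hb.2.symm)
  have hclass : ∀ q, #{a ∈ K₁ | C a = q} + #{a ∈ K₂ | C a = q} + #{a ∈ K₃ | C a = q} ≤ 2 := by
    intro q
    have := hfiber h₁ q
    have := hfiber h₂ q
    have := hfiber h₃ q
    by_contra! hq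
    obtain ⟨a, ha⟩ := card_pos.1 (by omega : 0 < #{a ∈ K₁ | C a = q})
    obtain ⟨b, hb⟩ := card_pos.1 (by omega : 0 < #{a ∈ K₂ | C a = q})
    obtain ⟨c, hc⟩ := card_pos.1 (by omega : 0 < #{a ∈ K₃ | C a = q})
    rw [mem_filter] at ha hb hc
    rcases h a ha.1 b hb.1 c hc.1 with hab | hac | hbc
    exacts [C.valid hab (ha.2.trans hb.2.symm), C.valid hac (ha.2.trans hc.2.symm),
      C.valid hbc (hb.2.trans hc.2.symm)]
  have hsum : ∀ K : Finset α, #K = ∑ q, #{a ∈ K | C a = q} := fun K =>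
    card_eq_sum_card_fiberwise fun _ _ => mem_univ _
  calc #K₁ + #K₂ + #K₃
      = ∑ q, (#{a ∈ K₁ | C a = q} + #{a ∈ K₂ | C a = q} + #{a ∈ K₃ | C a = q}) := by
        rw [sum_add_distrib, sum_add_distrib, ← hsum, ← hsum, ← hsum]
    _ ≤ ∑ _q : Fin n, 2 := sum_le_sum fun q _ => hclass q
    _ = 2 * n := by simp [mul_comm]

section InterferenceGraph

variable {T : SimpleGraph V}

theorem interGraph_adj {S : Set (Request T)} {r r' : S} :
    (interGraph T S).Adj r r' ↔ r ≠ r' ∧ Interfere T r r' :=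
  Iff.rfl

theorem interGraph_colorable_of_subset_union {R S S' : Set (Request T)}
    (h : R ⊆ S ∪ S') {m n : ℕ} (hS : (interGraph T S).Colorable m)
    (hS' : (interGraph T S').Colorable n) : (interGraph T R).Colorable (m + n) := by
  classical
  obtain ⟨C⟩ := hS
  obtain ⟨C'⟩ := hS'
  refine ⟨Coloring.mk (fun r => if hr : r.1 ∈ S then Fin.castAdd n (C ⟨r, hr⟩)
    else Fin.natAdd m (C' ⟨r, (h r.2).resolve_left hr⟩)) ?_⟩
  intro r r' hrr' heq
  obtain ⟨hne, hrr'⟩ := interGraph_adj.1 hrr'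
  have hadj : ∀ {S : Set (Request T)} (hr : r.1 ∈ S) (hr' : r'.1 ∈ S),
      (interGraph T S).Adj ⟨r, hr⟩ ⟨r', hr'⟩ :=
    fun _ _ => interGraph_adj.2 ⟨fun h => hne (Subtype.ext (Subtype.mk.inj h)), hrr'⟩
  by_cases hr : r.1 ∈ S <;> by_cases hr' : r'.1 ∈ S <;>
    simp only [hr, hr', dite_true, dite_false, Fin.ext_iff, Fin.val_castAdd, Fin.val_natAdd] at heq
  · exact C.valid (hadj hr hr') (Fin.ext heq)
  · exact absurd heq (by omega)
  · exact absurd heq (by omega)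
  · exact C'.valid (hadj _ _) (Fin.ext (by omega))

theorem exists_isClique_interGraph_card_eq_cliqueNum {S R : Set (Request T)} (hSR : S ⊆ R) :
    ∃ K : Finset R, (interGraph T R).IsClique (K : Set R) ∧ #K = (interGraph T S).cliqueNum ∧
      ∀ r ∈ K, (r : Request T) ∈ S := by
  obtain ⟨s, hs⟩ := (interGraph T S).exists_isNClique_cliqueNum
  refine ⟨s.map ⟨Set.inclusion hSR, Set.inclusion_injective hSR⟩, ?_, by rw [card_map, hs.card_eq],
    fun r hr => ?_⟩
  · intro x hx y hy hxy
    obtain ⟨a, ha, rfl⟩ := mem_map.1 hx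
    obtain ⟨b, hb, rfl⟩ := mem_map.1 hy
    exact interGraph_adj.2 ⟨hxy, (interGraph_adj.1 (hs.isClique ha hb fun h => hxy (h ▸ rfl))).2⟩
  · obtain ⟨a, -, rfl⟩ := mem_map.1 hr
    exact a.2

end InterferenceGraph

section RootedTree

variable {T : SimpleGraph V}

theorem SimpleGraph.IsTree.length_eq_dist_of_isPath (hT : T.IsTree) {u v : V} {p : T.Walk u v}
    (hp : p.IsPath) : p.length = T.dist u v := by
  obtain ⟨q, hq, hqd⟩ := hT.connected.exists_path_of_dist u v
  rw [(hT.existsUnique_path u v).unique hp hq, hqd]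

-- With an arbitrary first argument, `Ancestor T u x v` says that `x` lies on the path from `u`
-- to `v`.
theorem ancestor_iff_mem_support (hT : T.IsTree) {u v x : V} {p : T.Walk u v} (hp : p.IsPath) :
    Ancestor T u x v ↔ x ∈ p.support :=
  ⟨fun ⟨_, hq, hx⟩ => (hT.existsUnique_path u v).unique hq hp ▸ hx, fun hx => ⟨p, hp, hx⟩⟩

theorem ancestor_iff_dist (hT : T.IsTree) {u x v : V} :
    Ancestor T u x v ↔ T.dist u x + T.dist x v = T.dist u v := by
  classical
  constructor
  · rintro ⟨p, hp, hx⟩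
    rw [← hT.length_eq_dist_of_isPath (hp.takeUntil hx),
      ← hT.length_eq_dist_of_isPath (hp.dropUntil hx), ← hT.length_eq_dist_of_isPath hp,
      ← Walk.length_append, Walk.take_spec]
  · intro h
    obtain ⟨p, -, hp⟩ := hT.connected.exists_path_of_dist u x
    obtain ⟨q, -, hq⟩ := hT.connected.exists_path_of_dist x v
    refine ⟨p.append q, (p.append q).isPath_of_length_eq_dist ?_, ?_⟩
    · rw [Walk.length_append, hp, hq, h]
    · exact (Walk.mem_support_append_iff p q).2 (Or.inl p.end_mem_support)

theorem ancestor_comm (hT : T.IsTree) {u x v : V} : Ancestor T u x v ↔ Ancestor T v x u := by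
  rw [ancestor_iff_dist hT, ancestor_iff_dist hT, T.dist_comm (u := v) (v := x),
    T.dist_comm (u := x) (v := u), T.dist_comm (u := v) (v := u), add_comm]

variable {z : V}

local notation:50 x:51 " ≼ " y:51 => Ancestor T z x y

theorem ancestor_refl (hT : T.IsTree) (x : V) : x ≼ x := by
  simp [ancestor_iff_dist hT]

theorem Ancestor.trans (hT : T.IsTree) {x y w : V} (h₁ : x ≼ y) (h₂ : y ≼ w) : x ≼ w := by
  rw [ancestor_iff_dist hT] at *
  have := hT.connected.dist_triangle (u := z) (v := x) (w := w)
  have := hT.connected.dist_triangle (u := x) (v := y) (w := w)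
  omega

theorem Ancestor.antisymm (hT : T.IsTree) {x y : V} (h₁ : x ≼ y) (h₂ : y ≼ x) : x = y := by
  rw [ancestor_iff_dist hT] at h₁ h₂
  have := T.dist_comm (u := x) (v := y)
  exact hT.connected.dist_eq_zero_iff.1 (by omega)

theorem Ancestor.of_dist_le (hT : T.IsTree) {x y w : V} (hx : x ≼ w) (hy : y ≼ w)
    (hxy : T.dist z x ≤ T.dist z y) : x ≼ y := by
  classical
  obtain ⟨p, hp, hxp⟩ := hx
  have hyp : y ∈ p.support := (ancestor_iff_mem_support hT hp).1 hy
  have hlen : ∀ {a} (ha : a ∈ p.support), (p.takeUntil a ha).length = T.dist z a :=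
    fun ha => hT.length_eq_dist_of_isPath (hp.takeUntil ha)
  refine ⟨p.takeUntil y hyp, hp.takeUntil hyp, ?_⟩
  rw [← p.getVert_length_takeUntil hxp, hlen hxp,
    ← Walk.getVert_takeUntil hyp (by rw [hlen hyp]; exact hxy)]
  exact Walk.getVert_mem_support _ _

theorem Ancestor.eq_of_dist_eq (hT : T.IsTree) {x y w : V} (hx : x ≼ w) (hy : y ≼ w)
    (hxy : T.dist z x = T.dist z y) : x = y :=
  (hx.of_dist_le hT hy hxy.le).antisymm hT (hy.of_dist_le hT hx hxy.ge)

theorem related_of_adj (hT : T.IsTree) {x y : V} (h : T.Adj x y) : Related T z x y := by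
  simp only [Related, ancestor_iff_dist hT, dist_eq_one_iff_adj.2 h, dist_eq_one_iff_adj.2 h.symm]
  have := hT.dist_eq_dist_add_one_of_adj z h
  omega

theorem Ancestor.related (hT : T.IsTree) {x y w : V} (hx : x ≼ w) (hy : y ≼ w) :
    Related T z x y :=
  (le_total (T.dist z x) (T.dist z y)).imp (hx.of_dist_le hT hy) (hy.of_dist_le hT hx)

theorem not_ancestor_of_not_related (hT : T.IsTree) {x y m q : V} (hxy : ¬ Related T z x y)
    (hyq : Related T z y q) (hmq : m ≼ q) : ¬ x ≼ m := by
  intro hxm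
  rcases hyq with hyq | hqy
  · exact hxy ((hxm.trans hT hmq).related hT hyq)
  · exact hxy (Or.inl ((hxm.trans hT hmq).trans hT hqy))

def IsChild (T : SimpleGraph V) (z m c : V) : Prop :=
  Ancestor T z m c ∧ T.Adj m c

theorem IsChild.dist_eq (hT : T.IsTree) {m c : V} (h : IsChild T z m c) :
    T.dist z c = T.dist z m + 1 := by
  have := (ancestor_iff_dist hT).1 h.1
  rw [dist_eq_one_iff_adj.2 h.2] at this
  omega

theorem IsChild.not_ancestor (hT : T.IsTree) {m c : V} (h : IsChild T z m c) : ¬ c ≼ m :=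
  fun h' => h.2.ne (h.1.antisymm hT h')

theorem IsChild.parent_unique (hT : T.IsTree) {m m' c : V} (h : IsChild T z m c)
    (h' : IsChild T z m' c) : m = m' :=
  h.1.eq_of_dist_eq hT h'.1 (by have := h.dist_eq hT; have := h'.dist_eq hT; omega)

theorem IsChild.eq_of_ancestor (hT : T.IsTree) {m a b w : V} (ha : IsChild T z m a)
    (hb : IsChild T z m b) (haw : a ≼ w) (hbw : b ≼ w) : a = b :=
  haw.eq_of_dist_eq hT hbw (by rw [ha.dist_eq hT, hb.dist_eq hT])

theorem isChild_or_isChild_of_adj (hT : T.IsTree) {x y : V} (h : T.Adj x y) :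
    IsChild T z x y ∨ IsChild T z y x :=
  (related_of_adj hT h).imp (⟨·, h⟩) (⟨·, h.symm⟩)

theorem IsChild.ancestor_of_related (hT : T.IsTree) {m c p x : V} (hc : IsChild T z m c)
    (hcp : c ≼ p) (hxp : Related T z x p) (hxm : ¬ x ≼ m) : c ≼ x := by
  rcases hxp with hxp | hpx
  · refine hcp.of_dist_le hT hxp ?_
    rw [hc.dist_eq hT]
    by_contra! h
    exact hxm (hxp.of_dist_le hT (hc.1.trans hT hcp) (by omega))
  · exact hcp.trans hT hpx

def IsApexIndex (T : SimpleGraph V) (z : V) {u v : V} (p : T.Walk u v) (k : ℕ) : Prop :=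
  k ≤ p.length ∧ (∀ i < k, Ancestor T z (p.getVert (i + 1)) (p.getVert i)) ∧
    ∀ i, k ≤ i → i < p.length → Ancestor T z (p.getVert i) (p.getVert (i + 1))

theorem SimpleGraph.Walk.IsPath.exists_isApexIndex (hT : T.IsTree) {u v : V} {p : T.Walk u v}
    (hp : p.IsPath) : ∃ k, IsApexIndex T z p k := by
  induction p with
  | nil =>
    exact ⟨0, le_rfl, fun i hi => absurd hi i.not_lt_zero, fun i _ hi => absurd hi i.not_lt_zero⟩
  | @cons u x v h q ih =>
    obtain ⟨hq, hu⟩ := (Walk.cons_isPath_iff h q).1 hp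
    obtain ⟨k, hk, hup, hdown⟩ := ih hq
    rcases related_of_adj hT h with hux | hxu
    · -- after a step away from the root, the parent `u` is excluded, so the path keeps descending
      have hk0 : k = 0 := by
        by_contra hk0
        have hq1 : IsChild T z (q.getVert 1) x := ⟨by simpa using hup 0 (by omega),
          by simpa using (q.adj_getVert_succ (i := 0) (by omega)).symm⟩
        exact hu (hq1.parent_unique hT ⟨hux, h⟩ ▸ q.getVert_mem_support 1)
      subst hk0
      refine ⟨0, Nat.zero_le _, fun i hi => absurd hi i.not_lt_zero, fun i _ hi => ?_⟩
      cases i with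
      | zero => simpa using hux
      | succ i => simpa using hdown i (Nat.zero_le _) (by simpa using hi)
    · refine ⟨k + 1, by simpa using hk, fun i hi => ?_, fun i hi hi' => ?_⟩
      · cases i with
        | zero => simpa using hxu
        | succ i => simpa using hup i (by omega)
      · obtain ⟨i, rfl⟩ : ∃ j, i = j + 1 := ⟨i - 1, by omega⟩
        simpa using hdown i (by omega) (by simpa using hi')

theorem IsApexIndex.ancestor_of_le_apex (hT : T.IsTree) {u v : V} {p : T.Walk u v} {k : ℕ}
    (h : IsApexIndex T z p k) {i j : ℕ} (hij : i ≤ j) (hjk : j ≤ k) :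
    p.getVert j ≼ p.getVert i := by
  induction j, hij using Nat.le_induction with
  | base => exact ancestor_refl hT _
  | succ j hij ih => exact (h.2.1 j (by omega)).trans hT (ih (by omega))

theorem IsApexIndex.ancestor_of_apex_le (hT : T.IsTree) {u v : V} {p : T.Walk u v} {k : ℕ}
    (h : IsApexIndex T z p k) {i j : ℕ} (hki : k ≤ i) (hij : i ≤ j) (hj : j ≤ p.length) :
    p.getVert i ≼ p.getVert j := by
  induction j, hij using Nat.le_induction with
  | base => exact ancestor_refl hT _
  | succ j hij ih => exact (ih (by omega)).trans hT (h.2.2 j (by omega) (by omega))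

theorem ancestor_iff_of_isChild (hT : T.IsTree) {u c v : V} (hc : IsChild T z u c) :
    Ancestor T u c v ↔ c ≼ v := by
  constructor
  · rintro ⟨p, hp, hcp⟩
    have hsnd : c = p.snd := hT.isAcyclic.eq_snd_of_adj_start hp hc.2 hcp
    have hlen : 0 < p.length := by
      cases p with
      | nil => exact absurd (by simpa using hcp) hc.2.ne'
      | cons => simp
    obtain ⟨k, hk⟩ := hp.exists_isApexIndex hT (z := z)
    have hk0 : k = 0 := by
      by_contra hk0
      exact hc.not_ancestor hT (hsnd ▸ by simpa using hk.2.1 0 (by omega))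
    subst hk0
    simpa [← hsnd] using hk.ancestor_of_apex_le hT (i := 1) (j := p.length) (by omega) hlen le_rfl
  · intro hcv
    have huv := hc.1.trans hT hcv
    rw [ancestor_iff_dist hT] at hcv huv ⊢
    rw [dist_eq_one_iff_adj.2 hc.2]
    have := hc.dist_eq hT
    omega

theorem ancestor_iff_not_ancestor_of_isChild (hT : T.IsTree) {w u v : V}
    (hw : IsChild T z w u) : Ancestor T u w v ↔ ¬ u ≼ v := by
  constructor
  · intro hwv huv
    have hwv' := hw.1.trans hT huv
    have := hw.dist_eq hT
    rw [ancestor_iff_dist hT] at hwv huv hwv'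
    rw [dist_eq_one_iff_adj.2 hw.2.symm] at hwv
    omega
  · intro huv
    obtain ⟨p, hp, -⟩ := hT.connected.exists_path_of_dist u v
    cases p with
    | nil => exact absurd (ancestor_refl hT u) huv
    | cons h q =>
      rcases isChild_or_isChild_of_adj hT h with hux | hxu
      · exact absurd (hux.1.trans hT ((ancestor_iff_of_isChild hT hux).1 ⟨_, hp, by simp⟩)) huv
      · exact hw.parent_unique hT hxu ▸ ⟨_, hp, by simp⟩

theorem Request.adj_sPlus (r : Request T) : T.Adj r.s r.sPlus := by
  simpa [Request.sPlus] using r.toWalk.adj_getVert_succ (i := 0) r.one_le_length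

theorem Request.adj_tMinus (r : Request T) : T.Adj r.tMinus r.t := by
  have := r.toWalk.adj_getVert_succ (i := r.toWalk.length - 1) (by have := r.one_le_length; omega)
  rwa [Nat.sub_add_cancel r.one_le_length, Walk.getVert_length] at this

theorem interferesOn_self (r : Request T) : InterferesOn T r r :=
  ⟨r.toWalk, r.isPath, r.one_le_length, rfl, rfl⟩

theorem interferesOn_iff (hT : T.IsTree) {r r' : Request T} :
    InterferesOn T r r' ↔
      r.s ≠ r'.t ∧ Ancestor T r.s r.sPlus r'.t ∧ Ancestor T r'.t r'.tMinus r.s := by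
  constructor
  · rintro ⟨p, hp, hlen, h1, h2⟩
    refine ⟨fun h => ?_, ⟨p, hp, h1 ▸ p.getVert_mem_support 1⟩,
      (ancestor_comm hT).1 ⟨p, hp, h2 ▸ p.getVert_mem_support _⟩⟩
    have := hT.length_eq_dist_of_isPath hp
    rw [hT.connected.dist_eq_zero_iff.2 h] at this
    omega
  · rintro ⟨hne, hs, ht⟩
    obtain ⟨p, hp, hlen⟩ := hT.connected.exists_path_of_dist r.s r'.t
    refine ⟨p, hp, hlen ▸ hT.connected.pos_dist_of_ne hne, ?_, ?_⟩
    · exact (hT.isAcyclic.eq_snd_of_adj_start hp r.adj_sPlus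
        ((ancestor_iff_mem_support hT hp).1 hs)).symm
    · exact (hT.isAcyclic.eq_penultimate_of_adj_end hp r'.adj_tMinus.symm
        ((ancestor_iff_mem_support hT hp).1 ((ancestor_comm hT).1 ht))).symm

theorem ne_and_ancestor_and_ancestor_iff (hT : T.IsTree) {u c v w : V} (hc : IsChild T z u c)
    (hw : IsChild T z w v) : (u ≠ v ∧ Ancestor T u c v ∧ Ancestor T v w u) ↔ c ≼ v := by
  refine ⟨fun h => (ancestor_iff_of_isChild hT hc).1 h.2.1, fun hcv => ⟨?_,
    (ancestor_iff_of_isChild hT hc).2 hcv, (ancestor_iff_not_ancestor_of_isChild hT hw).2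
      fun hvu => hc.not_ancestor hT (hcv.trans hT hvu)⟩⟩
  rintro rfl
  exact hc.not_ancestor hT hcv

variable {r r' : Request T}

theorem interferesOn_iff_sPlus_ancestor (hT : T.IsTree) (hr : IsChild T z r.s r.sPlus)
    (hr' : IsChild T z r'.tMinus r'.t) : InterferesOn T r r' ↔ r.sPlus ≼ r'.t :=
  (interferesOn_iff hT).trans (ne_and_ancestor_and_ancestor_iff hT hr hr')

theorem interferesOn_iff_tMinus_ancestor (hT : T.IsTree) (hr : IsChild T z r.sPlus r.s)
    (hr' : IsChild T z r'.t r'.tMinus) : InterferesOn T r r' ↔ r'.tMinus ≼ r.s := by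
  rw [interferesOn_iff hT, ← ne_and_ancestor_and_ancestor_iff hT hr' hr, ne_comm]
  exact and_congr_right fun _ => and_comm

theorem interferesOn_of_not_related (hT : T.IsTree) (hr : IsChild T z r.sPlus r.s)
    (hr' : IsChild T z r'.tMinus r'.t) (h : ¬ Related T z r.s r'.t) : InterferesOn T r r' := by
  rw [interferesOn_iff hT, ancestor_iff_not_ancestor_of_isChild hT hr,
    ancestor_iff_not_ancestor_of_isChild hT hr']
  refine ⟨fun heq => h (Or.inl ?_), fun h' => h (Or.inl h'), fun h' => h (Or.inr h')⟩
  rw [heq]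
  exact ancestor_refl hT _

theorem Converging.isChild_sPlus_s (h : Converging T z r) : IsChild T z r.sPlus r.s :=
  ⟨by simpa [Request.sPlus] using h 0 r.one_le_length, r.adj_sPlus.symm⟩

theorem Converging.isChild_t_tMinus (h : Converging T z r) : IsChild T z r.t r.tMinus := by
  have := h (r.toWalk.length - 1) (by have := r.one_le_length; omega)
  rw [Nat.sub_add_cancel r.one_le_length, Walk.getVert_length] at this
  exact ⟨this, r.adj_tMinus.symm⟩

theorem Diverging.isChild_s_sPlus (h : Diverging T z r) : IsChild T z r.s r.sPlus :=
  ⟨by simpa [Request.sPlus] using h 0 r.one_le_length, r.adj_sPlus⟩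

theorem Diverging.isChild_tMinus_t (h : Diverging T z r) : IsChild T z r.tMinus r.t := by
  have := h (r.toWalk.length - 1) (by have := r.one_le_length; omega)
  rw [Nat.sub_add_cancel r.one_le_length, Walk.getVert_length] at this
  exact ⟨this, r.adj_tMinus⟩

theorem Converging.tMinus_ancestor_s (hT : T.IsTree) (h : Converging T z r) : r.tMinus ≼ r.s :=
  (interferesOn_iff_tMinus_ancestor hT h.isChild_sPlus_s h.isChild_t_tMinus).1 (interferesOn_self r)

theorem Diverging.sPlus_ancestor_t (hT : T.IsTree) (h : Diverging T z r) : r.sPlus ≼ r.t :=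
  (interferesOn_iff_sPlus_ancestor hT h.isChild_s_sPlus h.isChild_tMinus_t).1 (interferesOn_self r)

theorem Converging.not_diverging (hT : T.IsTree) (h : Converging T z r) : ¬ Diverging T z r :=
  fun h' => h.isChild_sPlus_s.not_ancestor hT h'.isChild_s_sPlus.1

theorem Converging.interfere_iff (hT : T.IsTree) (h : Converging T z r) (h' : Converging T z r') :
    Interfere T r r' ↔ r.tMinus ≼ r'.s ∨ r'.tMinus ≼ r.s := by
  rw [Interfere, interferesOn_iff_tMinus_ancestor hT h.isChild_sPlus_s h'.isChild_t_tMinus,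
    interferesOn_iff_tMinus_ancestor hT h'.isChild_sPlus_s h.isChild_t_tMinus, or_comm]

theorem Diverging.interfere_iff (hT : T.IsTree) (h : Diverging T z r) (h' : Diverging T z r') :
    Interfere T r r' ↔ r.sPlus ≼ r'.t ∨ r'.sPlus ≼ r.t := by
  rw [Interfere, interferesOn_iff_sPlus_ancestor hT h.isChild_s_sPlus h'.isChild_tMinus_t,
    interferesOn_iff_sPlus_ancestor hT h'.isChild_s_sPlus h.isChild_tMinus_t]

theorem Unimodal.exists_isApexIndex (hT : T.IsTree) (h : Unimodal T z r) :
    ∃ k, 0 < k ∧ k < r.toWalk.length ∧ IsApexIndex T z r.toWalk k := by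
  obtain ⟨k, hk⟩ := r.isPath.exists_isApexIndex hT (z := z)
  exact ⟨k, Nat.pos_of_ne_zero fun hk0 => h.2 fun i hi => hk.2.2 i (by omega) hi,
    lt_of_le_of_ne hk.1 fun hkl => h.1 fun i hi => hk.2.1 i (by omega), hk⟩

theorem Unimodal.isChild_sPlus_s (hT : T.IsTree) (h : Unimodal T z r) :
    IsChild T z r.sPlus r.s := by
  obtain ⟨k, hk0, -, hk⟩ := h.exists_isApexIndex hT
  exact ⟨by simpa [Request.sPlus] using hk.2.1 0 hk0, r.adj_sPlus.symm⟩

theorem Unimodal.isChild_tMinus_t (hT : T.IsTree) (h : Unimodal T z r) :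
    IsChild T z r.tMinus r.t := by
  obtain ⟨k, -, hkl, hk⟩ := h.exists_isApexIndex hT
  have := hk.2.2 (r.toWalk.length - 1) (by omega) (by omega)
  rw [Nat.sub_add_cancel r.one_le_length, Walk.getVert_length] at this
  exact ⟨this, r.adj_tMinus⟩

theorem Unimodal.not_related (hT : T.IsTree) (h : Unimodal T z r) : ¬ Related T z r.s r.t := by
  obtain ⟨-, hs, ht⟩ := (interferesOn_iff hT).1 (interferesOn_self r)
  rintro (hst | hts)
  · exact (ancestor_iff_not_ancestor_of_isChild hT (h.isChild_sPlus_s hT)).1 hs hst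
  · exact (ancestor_iff_not_ancestor_of_isChild hT (h.isChild_tMinus_t hT)).1 ht hts

-- For a unimodal request from `s` to `t`, `a` and `b` are its two vertices next to its middle.
def IsFork (T : SimpleGraph V) (z a b s t : V) : Prop :=
  a ≠ b ∧ Ancestor T z a s ∧ Ancestor T z b t ∧ ∃ m, IsChild T z m a ∧ IsChild T z m b

theorem Unimodal.exists_isFork (hT : T.IsTree) (h : Unimodal T z r) :
    ∃ a b, IsFork T z a b r.s r.t := by
  obtain ⟨k, hk0, hkl, hk⟩ := h.exists_isApexIndex hT
  have hk1 : k - 1 + 1 = k := Nat.sub_add_cancel hk0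
  refine ⟨r.toWalk.getVert (k - 1), r.toWalk.getVert (k + 1), fun he => ?_, ?_, ?_,
    r.toWalk.getVert k, ⟨?_, ?_⟩, hk.2.2 k le_rfl hkl, r.toWalk.adj_getVert_succ hkl⟩
  · have := r.isPath.getVert_injOn (by simp; omega) (by simp; omega) he
    omega
  · simpa using hk.ancestor_of_le_apex hT (Nat.zero_le (k - 1)) (by omega)
  · simpa using hk.ancestor_of_apex_le hT (j := r.toWalk.length) (by omega) (by omega) le_rfl
  · simpa [hk1] using hk.2.1 (k - 1) (by omega)
  · simpa [hk1] using (r.toWalk.adj_getVert_succ (i := k - 1) (by omega)).symm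

theorem IsFork.ancestor_of_related (hT : T.IsTree) {s t a' b' s' t' : V}
    (hf' : IsFork T z a' b' s' t') (hst : ¬ Related T z s t) (hst' : Related T z s t')
    (hts' : Related T z t s') : b' ≼ s ∧ a' ≼ t := by
  obtain ⟨-, has', hbt', m', hma', hmb'⟩ := hf'
  exact ⟨hmb'.ancestor_of_related hT hbt' hst'
      (not_ancestor_of_not_related hT hst hts' (hma'.1.trans hT has')),
    hma'.ancestor_of_related hT has' hts'
      (not_ancestor_of_not_related hT (fun h => hst (Or.symm h)) hst' (hmb'.1.trans hT hbt'))⟩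

theorem IsFork.dist_le (hT : T.IsTree) {a b s t a' b' s' t' : V} (hf : IsFork T z a b s t)
    (hf' : IsFork T z a' b' s' t') (hb's : b' ≼ s) (ha't : a' ≼ t) :
    T.dist z a' ≤ T.dist z a := by
  obtain ⟨hab, has, hbt, m, hma, hmb⟩ := hf
  obtain ⟨-, -, -, m', hma', hmb'⟩ := hf'
  by_contra! hlt
  have := hma.dist_eq hT
  have := hmb.dist_eq hT
  have := hma'.dist_eq hT
  exact hab (hma.eq_of_ancestor hT hmb (has.of_dist_le hT (hmb'.1.trans hT hb's) (by omega))
    (hbt.of_dist_le hT (hma'.1.trans hT ha't) (by omega)))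

theorem IsFork.eq_of_related (hT : T.IsTree) {a b s t a' b' s' t' : V} (hf : IsFork T z a b s t)
    (hf' : IsFork T z a' b' s' t') (hst : ¬ Related T z s t) (hst' : ¬ Related T z s' t')
    (h₁ : Related T z s t') (h₂ : Related T z s' t) : a = b' := by
  obtain ⟨hb's, ha't⟩ := hf'.ancestor_of_related hT hst h₁ (Or.symm h₂)
  obtain ⟨hbs', hat'⟩ := hf.ancestor_of_related hT hst' h₂ (Or.symm h₁)
  have := hf.dist_le hT hf' hb's ha't
  have := hf'.dist_le hT hf hbs' hat'
  obtain ⟨-, has, -⟩ := hf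
  obtain ⟨-, -, -, m', hma', hmb'⟩ := hf'
  exact has.eq_of_dist_eq hT hb's (by rw [hmb'.dist_eq hT, ← hma'.dist_eq hT]; omega)

theorem Diverging.interfere_or_interfere_or_interfere (hT : T.IsTree) {d c u : Request T}
    (hd : Diverging T z d) (hc : Converging T z c) (hu : Unimodal T z u) :
    Interfere T d c ∨ Interfere T d u ∨ Interfere T c u := by
  by_contra! h
  obtain ⟨hdc, hdu, hcu⟩ := h
  have hus := hu.isChild_sPlus_s hT
  have hut := hu.isChild_tMinus_t hT
  have hud : Related T z u.s d.t := by
    by_contra h'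
    exact hdu (Or.inr (interferesOn_of_not_related hT hus hd.isChild_tMinus_t h'))
  have hdu' : ¬ d.sPlus ≼ u.t := fun h' =>
    hdu (Or.inl ((interferesOn_iff_sPlus_ancestor hT hd.isChild_s_sPlus hut).2 h'))
  have huc : ¬ c.tMinus ≼ u.s := fun h' =>
    hcu (Or.inr ((interferesOn_iff_tMinus_ancestor hT hus hc.isChild_t_tMinus).2 h'))
  have hcu' : Related T z c.s u.t := by
    by_contra h'
    exact hcu (Or.inl (interferesOn_of_not_related hT hc.isChild_sPlus_s hut h'))
  have hcd : Related T z c.s d.t := by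
    by_contra h'
    exact hdc (Or.inr (interferesOn_of_not_related hT hc.isChild_sPlus_s hd.isChild_tMinus_t h'))
  obtain ⟨a, b, hab, has, hbt, m, hma, hmb⟩ := hu.exists_isFork hT
  have hbc : b ≼ c.s := hmb.ancestor_of_related hT hbt hcu' fun hcm =>
    huc ((hc.tMinus_ancestor_s hT).trans hT (hcm.trans hT (hma.1.trans hT has)))
  have had : a ≼ d.t := hma.ancestor_of_related hT has (Or.symm hud) fun hdm =>
    hdu' ((hd.sPlus_ancestor_t hT).trans hT (hdm.trans hT (hmb.1.trans hT hbt)))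
  rcases hcd with h | h
  · exact hab (hma.eq_of_ancestor hT hmb had (hbc.trans hT h))
  · exact hab (hma.eq_of_ancestor hT hmb (had.trans hT h) hbc)

theorem Unimodal.related_of_not_interfere (hT : T.IsTree) (h : Unimodal T z r)
    (h' : Unimodal T z r') (hrr' : ¬ Interfere T r r') :
    Related T z r.s r'.t ∧ Related T z r'.s r.t := by
  constructor <;> by_contra hrel
  · exact hrr' (Or.inl (interferesOn_of_not_related hT (h.isChild_sPlus_s hT)
      (h'.isChild_tMinus_t hT) hrel))
  · exact hrr' (Or.inr (interferesOn_of_not_related hT (h'.isChild_sPlus_s hT)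
      (h.isChild_tMinus_t hT) hrel))

/-- Two non-interfering unimodal requests have swapped forks, so the requests whose fork `(a, b)`
satisfies `a < b` form a clique, and so do the others. -/
theorem isCobipartite_interGraph_of_unimodal (hT : T.IsTree) {S : Set (Request T)}
    (hS : ∀ r ∈ S, Unimodal T z r) : IsCobipartite (interGraph T S) := by
  classical
  choose a b hab using fun r : S => (hS r r.2).exists_isFork hT
  let _ : LinearOrder V := linearOrderOfSTO WellOrderingRel
  have hswap : ∀ r r' : S, r ≠ r' → ¬ (interGraph T S).Adj r r' → a r = b r' := by
    intro r r' hne hadj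
    obtain ⟨h₁, h₂⟩ := (hS r r.2).related_of_not_interfere hT (hS r' r'.2) fun h => hadj ⟨hne, h⟩
    exact (hab r).eq_of_related hT (hab r') ((hS r r.2).not_related hT)
      ((hS r' r'.2).not_related hT) h₁ h₂
  refine ⟨{r | a r < b r}, fun r hr r' hr' hne => ?_, fun r hr r' hr' hne => ?_⟩ <;>
    by_contra hadj <;>
    have h₁ := hswap r r' hne hadj <;>
    have h₂ := hswap r' r hne.symm fun h => hadj h.symm
  · have hr : a r < b r := hr
    have hr' : a r' < b r' := hr'
    exact lt_irrefl _ ((hr.trans_eq h₂.symm).trans (hr'.trans_eq h₁.symm))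
  · have hr : b r < a r := lt_of_le_of_ne (not_lt.1 hr) (hab r).1.symm
    have hr' : b r' < a r' := lt_of_le_of_ne (not_lt.1 hr') (hab r').1.symm
    exact lt_irrefl _ ((hr'.trans_eq h₂).trans (hr.trans_eq h₁))

theorem isComparabilityGraph_of_ancestor (hT : T.IsTree) {ι : Type*} [Finite ι]
    {G : SimpleGraph ι} (a x : ι → V) (hax : ∀ i, a i ≼ x i)
    (hG : ∀ i j, G.Adj i j ↔ i ≠ j ∧ (a i ≼ x j ∨ a j ≼ x i)) : IsComparabilityGraph G := by
  refine isComparabilityGraph_of_adj_trans (fun i => T.dist z (a i))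
    fun i j k hij hjk hik dij djk => (hG i k).2 ⟨hik, Or.inl ?_⟩
  rcases ((hG i j).1 hij).2 with h₁ | h₁ <;> rcases ((hG j k).1 hjk).2 with h₂ | h₂
  · exact (h₁.of_dist_le hT (hax j) dij).trans hT h₂
  · exact (h₁.of_dist_le hT h₂ (dij.trans djk)).trans hT (hax k)
  · exact ((hax i).of_dist_le hT h₁ dij).trans hT h₂
  · have hij : a i ≼ x j := ((hax i).of_dist_le hT h₁ dij).trans hT (hax j)
    exact (hij.of_dist_le hT h₂ (dij.trans djk)).trans hT (hax k)

end RootedTree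

section Bounds

variable {T : SimpleGraph V}

theorem colorable_cliqueNum_add_cliqueNum_add_cliqueNum (hT : T.IsTree) (z : V)
    {R : Set (Request T)} (hR : R.Finite) :
    (interGraph T R).Colorable ((interGraph T {r ∈ R | Diverging T z r}).cliqueNum +
      (interGraph T {r ∈ R | Converging T z r}).cliqueNum +
      (interGraph T {r ∈ R | Unimodal T z r}).cliqueNum) := by
  have : ∀ P : Request T → Prop, Finite {r ∈ R | P r} := fun _ =>
    (hR.subset fun _ hr => hr.1).to_subtype
  have hd := (isComparabilityGraph_of_ancestor hT (fun r : {r ∈ R | Diverging T z r} => r.1.sPlus)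
    (fun r => r.1.t) (fun r => r.2.2.sPlus_ancestor_t hT) fun r r' => by
      rw [interGraph_adj, r.2.2.interfere_iff hT r'.2.2]).colorable_cliqueNum
  have hc := (isComparabilityGraph_of_ancestor hT (fun r : {r ∈ R | Converging T z r} => r.1.tMinus)
    (fun r => r.1.s) (fun r => r.2.2.tMinus_ancestor_s hT) fun r r' => by
      rw [interGraph_adj, r.2.2.interfere_iff hT r'.2.2]).colorable_cliqueNum
  have hu := (isCobipartite_interGraph_of_unimodal hT (S := {r ∈ R | Unimodal T z r})
    fun r hr => hr.2).colorable_cliqueNum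
  refine interGraph_colorable_of_subset_union (fun r hr => ?_)
    (interGraph_colorable_of_subset_union subset_rfl hd hc) hu
  by_cases hd : Diverging T z r
  · exact Or.inl (Or.inl ⟨hr, hd⟩)
  by_cases hc : Converging T z r
  · exact Or.inl (Or.inr ⟨hr, hc⟩)
  · exact Or.inr ⟨hr, hc, hd⟩

theorem cliqueNum_add_cliqueNum_add_cliqueNum_le_two_mul (hT : T.IsTree) (z : V)
    {R : Set (Request T)} {n : ℕ} (hn : (interGraph T R).Colorable n) :
    (interGraph T {r ∈ R | Diverging T z r}).cliqueNum +
      (interGraph T {r ∈ R | Converging T z r}).cliqueNum +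
      (interGraph T {r ∈ R | Unimodal T z r}).cliqueNum ≤ 2 * n := by
  obtain ⟨Kd, hKd, hKd_card, hKd_mem⟩ := exists_isClique_interGraph_card_eq_cliqueNum
    (T := T) (S := {r ∈ R | Diverging T z r}) fun _ hr => hr.1
  obtain ⟨Kc, hKc, hKc_card, hKc_mem⟩ := exists_isClique_interGraph_card_eq_cliqueNum
    (T := T) (S := {r ∈ R | Converging T z r}) fun _ hr => hr.1
  obtain ⟨Ku, hKu, hKu_card, hKu_mem⟩ := exists_isClique_interGraph_card_eq_cliqueNum
    (T := T) (S := {r ∈ R | Unimodal T z r}) fun _ hr => hr.1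
  rw [← hKd_card, ← hKc_card, ← hKu_card]
  refine hn.card_add_card_add_card_le_two_mul hKd hKc hKu fun d hdK c hcK u huK => ?_
  have hd := (hKd_mem d hdK).2
  have hc := (hKc_mem c hcK).2
  have hu := (hKu_mem u huK).2
  have hadj : ∀ {x y : R}, Interfere T x y → x ≠ y → (interGraph T R).Adj x y :=
    fun h hxy => interGraph_adj.2 ⟨hxy, h⟩
  rcases hd.interfere_or_interfere_or_interfere hT hc hu with h | h | h
  · exact Or.inl (hadj h fun h => hc.not_diverging hT (h ▸ hd))
  · exact Or.inr (Or.inl (hadj h fun h => hu.2 (h ▸ hd)))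
  · exact Or.inr (Or.inr (hadj h fun h => hu.1 (h ▸ hc)))

end Bounds

open SimpleGraph in
/-- Lemma 10: `χ(R,T) ≤ ω(R⁺,T) + ω(R⁻,T) + ω(R^∨,T) ≤ 2 χ(R,T)`. -/
theorem chi_le_sum_omega_le_two_chi {V : Type*} (T : SimpleGraph V) (hT : T.IsTree)
    (z : V) (R : Set (Request T)) (hR : R.Finite) :
    (interGraph T R).chromaticNumber ≤
        ((interGraph T {r ∈ R | Diverging T z r}).cliqueNum +
          (interGraph T {r ∈ R | Converging T z r}).cliqueNum +
          (interGraph T {r ∈ R | Unimodal T z r}).cliqueNum : ℕ) ∧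
    (((interGraph T {r ∈ R | Diverging T z r}).cliqueNum +
        (interGraph T {r ∈ R | Converging T z r}).cliqueNum +
        (interGraph T {r ∈ R | Unimodal T z r}).cliqueNum : ℕ) : ℕ∞) ≤
      2 * (interGraph T R).chromaticNumber := by
  have hcol := colorable_cliqueNum_add_cliqueNum_add_cliqueNum hT z hR
  refine ⟨hcol.chromaticNumber_le, ?_⟩
  rw [← ENat.natCast_toNat (chromaticNumber_ne_top_iff_exists.2 ⟨_, hcol⟩)]
  exact_mod_cast cliqueNum_add_cliqueNum_add_cliqueNum_le_two_mul hT z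
    (colorable_chromaticNumber hcol)
end

section
/- Let T be a bidirected tree rooted at a vertex z, and let Q be a branch of T, that is, the bidirected path between z and some leaf of T. Let r_0 be a request that shares at least one arc with Q, and let r be a unimodal request that is arc-disjoint from Q. Then r and r_0 interfere. -/
/-! In a tree, `(T.deleteEdges {s(a, b)}).Reachable a x` says that `x` lies on the `a`-side of
the edge `ab`. A request `r` interferes on `r'` as soon as `r'.t` lies on the `sPlus`-side of the
emission edge of `r` and `r.s` on the `tMinus`-side of the reception edge of `r'`.

Along a path, once an arc points away from the root so do all later arcs. Hence the emission arc of
a unimodal request `r` points towards the root `z` and its reception arc points away from it, so `z`,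
and with it the whole branch `Q`, which avoids both edges, lies on the `sPlus`-side of the first
edge and on the `tMinus`-side of the last edge of `r`. Let `cd` be an arc of `r₀` on `Q`. As `r`
avoids the edge `cd`, it lies on one side of it: on the `c`-side `r` interferes on `r₀`, on the
`d`-side `r₀` interferes on `r`. -/

open SimpleGraph

variable {V : Type*}

namespace SimpleGraph

variable {G : SimpleGraph V}

theorem Walk.reachable_deleteEdges_of_notMem_edges {x y u w : V} {e : Sym2 V} (q : G.Walk x y)
    (he : e ∉ q.edges) (hu : u ∈ q.support) (hw : w ∈ q.support) :
    (G.deleteEdges {e}).Reachable u w := by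
  classical
  have hx : ∀ v ∈ q.support, (G.deleteEdges {e}).Reachable x v := fun v hv =>
    ⟨(q.takeUntil v hv).toDeleteEdges {e} fun f hf hfe =>
      he ((Set.mem_singleton_iff.1 hfe) ▸ q.edges_takeUntil_subset_edges hv hf)⟩
  exact (hx u hu).symm.trans (hx w hw)

theorem Walk.reachable_deleteEdges_of_notMem_support {x y u w b : V} {e : Sym2 V}
    (q : G.Walk x y) (hb : b ∉ q.support) (hbe : b ∈ e) (hu : u ∈ q.support)
    (hw : w ∈ q.support) : (G.deleteEdges {e}).Reachable u w :=
  q.reachable_deleteEdges_of_notMem_edges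
    (fun he => hb (q.fst_mem_support_of_mem_edges (Sym2.other_spec hbe ▸ he))) hu hw

theorem Reachable.deleteEdges_of_not_reachable {H : SimpleGraph V} (hHG : H ≤ G)
    {x y b : V} {e : Sym2 V} (h : H.Reachable x y) (hb : ¬H.Reachable x b) (hbe : b ∈ e) :
    (G.deleteEdges {e}).Reachable x y := by
  classical
  obtain ⟨q⟩ := h
  refine (q.mapLe hHG).reachable_deleteEdges_of_notMem_support ?_ hbe
    (Walk.start_mem_support _) (Walk.end_mem_support _)
  rw [Walk.support_mapLe_eq_support]
  exact fun hbq => hb ⟨q.takeUntil b hbq⟩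

theorem Reachable.deleteEdges_or {u x : V} (h : G.Reachable u x) (v : V) :
    (G.deleteEdges {s(u, v)}).Reachable u x ∨ (G.deleteEdges {s(u, v)}).Reachable v x := by
  classical
  obtain ⟨q, hq⟩ := h.some.toPath
  cases q with
  | nil => exact Or.inl .rfl
  | @cons _ w _ huw q =>
    rw [Walk.cons_isPath_iff] at hq
    have hwx : (G.deleteEdges {s(u, v)}).Reachable w x :=
      q.reachable_deleteEdges_of_notMem_support hq.2 (Sym2.mem_mk_left u v)
        q.start_mem_support q.end_mem_support
    by_cases hwv : w = v
    · exact Or.inr (hwv ▸ hwx)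
    · exact Or.inl ((Adj.reachable (by simp [huw, hwv, huw.ne'])).trans hwx)

namespace IsAcyclic

variable (hG : G.IsAcyclic)
include hG

theorem not_reachable_deleteEdges {u v : V} (huv : G.Adj u v) :
    ¬(G.deleteEdges {s(u, v)}).Reachable u v :=
  isBridge_iff.1 (isAcyclic_iff_forall_adj_isBridge.1 hG huv)

theorem exists_isPath_notMem_support {u v x : V} (huv : G.Adj u v)
    (h : (G.deleteEdges {s(u, v)}).Reachable u x) :
    ∃ q : G.Walk x u, q.IsPath ∧ v ∉ q.support := by
  classical
  obtain ⟨q, hq⟩ := reachable_deleteEdges_iff_exists_walk.1 h.symm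
  refine ⟨q.toPath, q.toPath.2, fun hv => hG.not_reachable_deleteEdges huv ?_⟩
  exact h.trans (q.reachable_deleteEdges_of_notMem_edges hq q.start_mem_support
    (q.support_toPath_subset_support hv))

theorem penultimate_eq_of_reachable_deleteEdges {x y w : V} {q : G.Walk x y} (hq : q.IsPath)
    (hwy : G.Adj w y) (h : (G.deleteEdges {s(w, y)}).Reachable w x) : q.penultimate = w := by
  obtain ⟨q', hq', hy⟩ := hG.exists_isPath_notMem_support hwy h
  exact (hG.eq_penultimate_of_adj_end hq hwy.symm
    (hG.mem_support_of_ne_mem_support_of_adj_of_isPath hq hq' hwy.symm hy)).symm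

theorem snd_eq_of_reachable_deleteEdges {x y w : V} {q : G.Walk x y} (hq : q.IsPath)
    (hxw : G.Adj x w) (h : (G.deleteEdges {s(x, w)}).Reachable w y) : q.snd = w := by
  rw [← Walk.penultimate_reverse]
  exact hG.penultimate_eq_of_reachable_deleteEdges hq.reverse hxw.symm (by rwa [Sym2.eq_swap])

theorem ancestor_of_reachable_deleteEdges {a b z : V} (hab : G.Adj a b)
    (h : (G.deleteEdges {s(a, b)}).Reachable a z) : Ancestor G z a b := by
  obtain ⟨q, hq, hb⟩ := hG.exists_isPath_notMem_support hab h
  exact ⟨q.concat hab, hq.concat hb hab, q.support_subset_support_concat hab q.end_mem_support⟩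

theorem reachable_deleteEdges_of_adj_of_ne {a b c z : V} (hab : G.Adj a b) (hbc : G.Adj b c)
    (hac : a ≠ c) (h : (G.deleteEdges {s(a, b)}).Reachable a z) :
    (G.deleteEdges {s(b, c)}).Reachable b z := by
  classical
  have hbz : G.Reachable b z := hab.reachable.symm.trans (h.mono (deleteEdges_le _))
  refine (hbz.deleteEdges_or c).resolve_right fun hc => hac ?_
  obtain ⟨q, hq⟩ := hbz.symm.some.toPath
  rw [← hG.penultimate_eq_of_reachable_deleteEdges hq hab h,
    hG.penultimate_eq_of_reachable_deleteEdges hq hbc.symm (by rwa [Sym2.eq_swap])]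

theorem reachable_deleteEdges_getVert_of_le {x y z : V} {q : G.Walk x y} (hq : q.IsPath)
    {i k : ℕ} (hik : i ≤ k) (hk : k < q.length)
    (h : (G.deleteEdges {s(q.getVert i, q.getVert (i + 1))}).Reachable (q.getVert i) z) :
    (G.deleteEdges {s(q.getVert k, q.getVert (k + 1))}).Reachable (q.getVert k) z := by
  induction k, hik using Nat.le_induction with
  | base => exact h
  | succ k hik ih =>
    refine hG.reachable_deleteEdges_of_adj_of_ne (q.adj_getVert_succ (by omega))
      (q.adj_getVert_succ hk) (fun heq => ?_) (ih (by omega))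
    have := hq.getVert_injOn (by simp; omega) (by simp; omega) heq
    omega

end IsAcyclic

namespace Walk.IsPath

variable {x y : V} {q : G.Walk x y} (hq : q.IsPath)
include hq

theorem getVert_notMem_support_take {m n : ℕ} (hmn : m < n) (hn : n ≤ q.length) :
    q.getVert n ∉ (q.take m).support := by
  intro h
  obtain ⟨j, hj, -⟩ := Walk.mem_support_iff_exists_getVert.1 h
  rw [Walk.take_getVert] at hj
  have := hq.getVert_injOn (by simp; omega) (show n ≤ q.length from hn) hj
  omega

theorem getVert_notMem_support_drop {m n : ℕ} (hmn : m < n) (hn : n ≤ q.length) :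
    q.getVert m ∉ (q.drop n).support := by
  intro h
  obtain ⟨j, hj, hjle⟩ := Walk.mem_support_iff_exists_getVert.1 h
  rw [Walk.drop_getVert] at hj
  rw [Walk.drop_length] at hjle
  have := hq.getVert_injOn (by simp; omega) (show m ≤ q.length by omega) hj
  omega

theorem reachable_deleteEdges_of_le {i k : ℕ} (hki : k ≤ i) (hi : i < q.length) :
    (G.deleteEdges {s(q.getVert i, q.getVert (i + 1))}).Reachable (q.getVert i) (q.getVert k) := by
  have hk : (q.take i).getVert k = q.getVert k := by rw [Walk.take_getVert, min_eq_right hki]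
  exact (q.take i).reachable_deleteEdges_of_notMem_support
    (hq.getVert_notMem_support_take (Nat.lt_succ_self i) hi) (Sym2.mem_mk_right _ _)
    (Walk.end_mem_support _) (hk ▸ Walk.getVert_mem_support _ _)

theorem reachable_deleteEdges_of_lt {i k : ℕ} (hik : i < k) (hk : k ≤ q.length) :
    (G.deleteEdges {s(q.getVert i, q.getVert (i + 1))}).Reachable (q.getVert (i + 1))
      (q.getVert k) := by
  have hk' : (q.drop (i + 1)).getVert (k - (i + 1)) = q.getVert k := by
    rw [Walk.drop_getVert, Nat.add_sub_cancel' hik]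
  exact (q.drop (i + 1)).reachable_deleteEdges_of_notMem_support
    (hq.getVert_notMem_support_drop (Nat.lt_succ_self i) (by omega)) (Sym2.mem_mk_left _ _)
    (Walk.start_mem_support _) (hk' ▸ Walk.getVert_mem_support _ _)

end Walk.IsPath

end SimpleGraph

namespace Request

variable {T : SimpleGraph V}

theorem not_nil (r : Request T) : ¬r.toWalk.Nil :=
  Walk.not_nil_iff_lt_length.2 r.one_le_length

theorem adj_sPlus_s14 (r : Request T) : T.Adj r.s r.sPlus :=
  r.toWalk.adj_snd r.not_nil

theorem adj_tMinus_s14 (r : Request T) : T.Adj r.tMinus r.t :=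
  r.toWalk.adj_penultimate r.not_nil

theorem reachable_deleteEdges_sPlus_getVert (r : Request T) {i : ℕ} (hi : 0 < i)
    (hi' : i ≤ r.toWalk.length) :
    (T.deleteEdges {s(r.s, r.sPlus)}).Reachable r.sPlus (r.toWalk.getVert i) := by
  simpa [sPlus] using r.isPath.reachable_deleteEdges_of_lt hi hi'

theorem reachable_deleteEdges_tMinus_getVert (r : Request T) {i : ℕ}
    (hi : i < r.toWalk.length) :
    (T.deleteEdges {s(r.tMinus, r.t)}).Reachable r.tMinus (r.toWalk.getVert i) := by
  have := r.isPath.reachable_deleteEdges_of_le (i := r.toWalk.length - 1) (k := i)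
    (by omega) (by omega)
  rwa [Nat.sub_add_cancel r.one_le_length, Walk.getVert_length] at this

end Request

theorem arcOn_iff_mem_edges {T : SimpleGraph V} {u v a b : V} {p : T.Walk u v} :
    ArcOn T p a b ↔ s(a, b) ∈ p.edges := by
  simp only [ArcOn, Walk.mk_mem_edges_iff_exists, Sym2.eq_iff]

theorem not_sharesArc_iff {T : SimpleGraph V} {u v : V} {p : T.Walk u v} {r : Request T} :
    ¬SharesArc T p r ↔ ∀ e ∈ r.toWalk.edges, e ∉ p.edges := by
  constructor
  · intro h e he hep
    induction e using Sym2.ind with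
    | _ a b =>
      obtain ⟨i, hi, hab⟩ := (Walk.mk_mem_edges_iff_exists _).1 he
      exact h ⟨i, hi, arcOn_iff_mem_edges.2 (hab ▸ hep)⟩
  · rintro h ⟨i, hi, harc⟩
    exact h _ ((Walk.mk_mem_edges_iff_exists _).2 ⟨i, hi, rfl⟩) (arcOn_iff_mem_edges.1 harc)

theorem interferesOn_of_reachable_deleteEdges {T : SimpleGraph V} (hT : T.IsAcyclic)
    {r r' : Request T} (hs : (T.deleteEdges {s(r.s, r.sPlus)}).Reachable r.sPlus r'.t)
    (ht : (T.deleteEdges {s(r'.tMinus, r'.t)}).Reachable r'.tMinus r.s) :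
    InterferesOn T r r' := by
  classical
  obtain ⟨q, hq⟩ := (r.adj_sPlus_s14.reachable.trans (hs.mono (deleteEdges_le _))).some.toPath
  have hsnd : q.snd = r.sPlus := hT.snd_eq_of_reachable_deleteEdges hq r.adj_sPlus_s14 hs
  refine ⟨q, hq, ?_, hsnd, hT.penultimate_eq_of_reachable_deleteEdges hq r'.adj_tMinus_s14 ht⟩
  by_contra! hlen
  exact r.adj_sPlus_s14.ne ((Walk.eq_of_length_eq_zero (p := q) (by omega)).trans
    ((q.getVert_of_length_le (by omega)).symm.trans hsnd))

namespace Unimodal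

variable {T : SimpleGraph V} (hT : T.IsTree) {z : V} {r : Request T} (hr : Unimodal T z r)
include hT hr

theorem reachable_deleteEdges_sPlus :
    (T.deleteEdges {s(r.s, r.sPlus)}).Reachable r.sPlus z := by
  refine ((hT.connected.preconnected r.s z).deleteEdges_or r.sPlus).resolve_left
    fun hdown => hr.2 fun k hk => hT.isAcyclic.ancestor_of_reachable_deleteEdges
      (r.toWalk.adj_getVert_succ hk)
      (hT.isAcyclic.reachable_deleteEdges_getVert_of_le r.isPath (Nat.zero_le k) hk ?_)
  rwa [Walk.getVert_zero]

theorem reachable_deleteEdges_tMinus :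
    (T.deleteEdges {s(r.tMinus, r.t)}).Reachable r.tMinus z := by
  obtain ⟨i, hi, hup⟩ : ∃ i < r.toWalk.length,
      ¬Ancestor T z (r.toWalk.getVert (i + 1)) (r.toWalk.getVert i) := by
    simpa [Converging] using hr.1
  have hadj := r.toWalk.adj_getVert_succ hi
  have hdown := ((hT.connected.preconnected (r.toWalk.getVert i) z).deleteEdges_or
    (r.toWalk.getVert (i + 1))).resolve_right fun h => hup
      (hT.isAcyclic.ancestor_of_reachable_deleteEdges hadj.symm (by rwa [Sym2.eq_swap]))
  have := hT.isAcyclic.reachable_deleteEdges_getVert_of_le r.isPath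
    (k := r.toWalk.length - 1) (by omega) (by omega) hdown
  rwa [Nat.sub_add_cancel (by omega), Walk.getVert_length] at this

theorem reachable_deleteEdges_of_mem_support {y w : V} {p : T.Walk z y}
    (hdisj : ¬SharesArc T p r) (hw : w ∈ p.support) :
    (T.deleteEdges {s(r.s, r.sPlus)}).Reachable r.sPlus w ∧
      (T.deleteEdges {s(r.tMinus, r.t)}).Reachable r.tMinus w := by
  have hedges := not_sharesArc_iff.1 hdisj
  exact ⟨(hr.reachable_deleteEdges_sPlus hT).trans (p.reachable_deleteEdges_of_notMem_edges
      (hedges _ (r.toWalk.mk_start_snd_mem_edges r.not_nil)) p.start_mem_support hw),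
    (hr.reachable_deleteEdges_tMinus hT).trans (p.reachable_deleteEdges_of_notMem_edges
      (hedges _ (r.toWalk.mk_penultimate_end_mem_edges r.not_nil)) p.start_mem_support hw)⟩

end Unimodal

theorem unimodal_interferes_with_branch_request_general {V : Type*} (T : SimpleGraph V)
    (hT : T.IsTree) (z y : V)
    (p : T.Walk z y)
    (r₀ r : Request T) (hr₀ : SharesArc T p r₀)
    (hr : Unimodal T z r) (hdisj : ¬ SharesArc T p r) :
    Interfere T r r₀ := by
  obtain ⟨i, hi, hcd⟩ := hr₀
  rw [arcOn_iff_mem_edges] at hcd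
  set c := r₀.toWalk.getVert i
  set d := r₀.toWalk.getVert (i + 1)
  have hbridge := hT.isAcyclic.not_reachable_deleteEdges (r₀.toWalk.adj_getVert_succ hi)
  have hle : T.deleteEdges {s(c, d)} ≤ T := deleteEdges_le _
  have hcs₀ : (T.deleteEdges {s(c, d)}).Reachable c r₀.s := by
    simpa using r₀.isPath.reachable_deleteEdges_of_le (Nat.zero_le i) hi
  have hdt₀ : (T.deleteEdges {s(c, d)}).Reachable d r₀.t := by
    simpa using r₀.isPath.reachable_deleteEdges_of_lt hi le_rfl
  have hst : (T.deleteEdges {s(c, d)}).Reachable r.s r.t :=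
    reachable_deleteEdges_iff_exists_walk.2 ⟨r.toWalk, fun h => not_sharesArc_iff.1 hdisj _ h hcd⟩
  have hc := hr.reachable_deleteEdges_of_mem_support hT hdisj (p.fst_mem_support_of_mem_edges hcd)
  have hd := hr.reachable_deleteEdges_of_mem_support hT hdisj (p.snd_mem_support_of_mem_edges hcd)
  rcases (hT.connected.preconnected c r.s).deleteEdges_or d with hcs | hds
  · exact Or.inl (interferesOn_of_reachable_deleteEdges hT.isAcyclic
      (hd.1.trans (hdt₀.deleteEdges_of_not_reachable hle
        (fun h => hbridge (hcs.trans h.symm)) (Sym2.mem_mk_left _ _)))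
      ((r₀.reachable_deleteEdges_tMinus_getVert hi).trans (hcs.deleteEdges_of_not_reachable hle
        (fun h => hbridge (h.trans hdt₀.symm)) (Sym2.mem_mk_right _ _))))
  · have hdt := hds.trans hst
    exact Or.inr (interferesOn_of_reachable_deleteEdges hT.isAcyclic
      ((r₀.reachable_deleteEdges_sPlus_getVert (Nat.succ_pos i) hi).trans
        (hdt.deleteEdges_of_not_reachable hle
          (fun h => hbridge (hcs₀.trans h.symm)) (Sym2.mem_mk_left _ _)))
      (hc.2.trans (hcs₀.deleteEdges_of_not_reachable hle
        (fun h => hbridge (h.trans hdt.symm)) (Sym2.mem_mk_right _ _))))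

/-- Lemma 14: if `Q` is a branch of `T` (bidirected path from the root `z` to a
leaf `y`), `r₀` is a request sharing an arc with `Q` and `r` is a unimodal
request arc-disjoint from `Q`, then `r` and `r₀` interfere. -/
theorem unimodal_interferes_with_branch_request {V : Type*} (T : SimpleGraph V)
    (hT : T.IsTree) (z y : V) (hy : IsLeaf T y)
    (p : T.Walk z y) (hp : p.IsPath)
    (r₀ r : Request T) (hr₀ : SharesArc T p r₀)
    (hr : Unimodal T z r) (hdisj : ¬ SharesArc T p r) :
    Interfere T r r₀ :=
  unimodal_interferes_with_branch_request_general T hT z y p r₀ r hr₀ hr hdisj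
end

section
/- Let n, m ≥ 1. Let the set of literals over variables x_1,...,x_n be the pairs (x_i, b) with b a Boolean (b = true representing x_i and b = false representing ¬x_i), and let C_1,...,C_m be clauses, where each clause C_j is a set {α_j, β_j, γ_j} of three literals. Let G be the complete bipartite graph with parts U = {u_1,...,u_m} and V = {v_1,...,v_n}, and let L be the list assignment with colours the literals, defined by L(u_j) = {α_j, β_j, γ_j} for all j and L(v_i) = {(x_i,true),(x_i,false)} for all i. Then the 3-CNF formula C_1 ∧ ... ∧ C_m is satisfiable (i.e., there is an assignment of Booleans to x_1,...,x_n making at least one literal of every clause true) if and only if G admits a proper L-colouring, that is, a map c on the vertices with c(w) ∈ L(w) for every vertex w and c(u) ≠ c(v) whenever u and v are adjacent. -/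
open SimpleGraph

variable {V : Type*}

/-!
Each `v_i` must take one of the two literals of `x_i`; read it as the literal made *false*.
Since every `u_j` is adjacent to every `v_i`, the colour of `u_j` is a literal of `C_j` that is
not false, i.e. a true literal of `C_j`; conversely, colouring each `u_j` by a true literal of
`C_j` and each `v_i` by the false literal of `x_i` is proper.
-/

namespace ListColouringSAT

variable {σ ι α : Type*}

theorem mem_pair_true_false_iff {i : σ} {p : σ × Bool} :
    p ∈ ({(i, true), (i, false)} : Set (σ × Bool)) ↔ p.1 = i := by
  obtain ⟨_, b⟩ := p
  cases b <;> simp [eq_comm]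

theorem forall_completeBipartiteGraph_adj_ne_iff {c : ι ⊕ σ → α} :
    (∀ u v, (completeBipartiteGraph ι σ).Adj u v → c u ≠ c v) ↔
      ∀ j i, c (Sum.inl j) ≠ c (Sum.inr i) := by
  refine ⟨fun h j i => h _ _ (by simp), fun h => ?_⟩
  rintro (j | i) (j' | i') hadj <;> simp only [completeBipartiteGraph_adj, Sum.isLeft_inl,
    Sum.isRight_inl, Sum.isLeft_inr, Sum.isRight_inr] at hadj <;> simp_all [Ne.symm]

theorem ne_mk_not_of_true {φ : σ → Bool} {ℓ : σ × Bool} (hℓ : φ ℓ.1 = ℓ.2) (i : σ) :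
    ℓ ≠ (i, !φ i) := by
  rintro rfl
  simp at hℓ

theorem snd_eq_not_of_ne_of_fst_eq {ℓ v : σ × Bool} (hfst : v.1 = ℓ.1) (hne : ℓ ≠ v) :
    ℓ.2 = !v.2 :=
  Bool.eq_not_of_ne fun hsnd => hne (Prod.ext hfst.symm hsnd)

theorem exists_satisfying_iff_exists_listColouring (C : ι → Set (σ × Bool)) :
    (∃ φ : σ → Bool, ∀ j, ∃ ℓ ∈ C j, φ ℓ.1 = ℓ.2) ↔
    ∃ c : ι ⊕ σ → σ × Bool,
      (∀ j, c (Sum.inl j) ∈ C j) ∧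
      (∀ i, c (Sum.inr i) ∈ ({(i, true), (i, false)} : Set (σ × Bool))) ∧
      ∀ u v, (completeBipartiteGraph ι σ).Adj u v → c u ≠ c v := by
  simp only [mem_pair_true_false_iff, forall_completeBipartiteGraph_adj_ne_iff]
  constructor
  · rintro ⟨φ, hφ⟩
    choose ℓ hℓC hℓtrue using hφ
    exact ⟨Sum.elim ℓ fun i => (i, !φ i), hℓC, fun _ => rfl,
      fun j i => ne_mk_not_of_true (hℓtrue j) i⟩
  · rintro ⟨c, hcC, hcVar, hne⟩
    exact ⟨fun i => !(c (Sum.inr i)).2, fun j =>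
      ⟨c (Sum.inl j), hcC j, (snd_eq_not_of_ne_of_fst_eq (hcVar _) (hne j _)).symm⟩⟩

end ListColouringSAT

open SimpleGraph in
theorem threeSat_iff_list_colouring_general (n m : ℕ)
    (α β γ : Fin m → Fin n × Bool) :
    (∃ φ : Fin n → Bool,
      ∀ j : Fin m, φ (α j).1 = (α j).2 ∨ φ (β j).1 = (β j).2 ∨ φ (γ j).1 = (γ j).2) ↔
    (∃ c : Fin m ⊕ Fin n → Fin n × Bool,
      (∀ j : Fin m, c (Sum.inl j) ∈ ({α j, β j, γ j} : Set (Fin n × Bool))) ∧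
      (∀ i : Fin n, c (Sum.inr i) ∈ ({(i, true), (i, false)} : Set (Fin n × Bool))) ∧
      ∀ u v, (completeBipartiteGraph (Fin m) (Fin n)).Adj u v → c u ≠ c v) := by
  rw [← ListColouringSAT.exists_satisfying_iff_exists_listColouring]
  simp only [Set.exists_mem_insert, Set.mem_singleton_iff, exists_eq_left]

open SimpleGraph in
/-- Theorem 20 (reduction from 3-SAT): the 3-CNF formula with clauses
`{α j, β j, γ j}` is satisfiable iff the complete bipartite graph `K_{m,n}` admits
a proper colouring from the lists `L(u_j) = {α_j, β_j, γ_j}` and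
`L(v_i) = {(x_i, true), (x_i, false)}`, the colours being the literals. -/
theorem threeSat_iff_list_colouring (n m : ℕ) (hn : 1 ≤ n) (hm : 1 ≤ m)
    (α β γ : Fin m → Fin n × Bool) :
    (∃ φ : Fin n → Bool,
      ∀ j : Fin m, φ (α j).1 = (α j).2 ∨ φ (β j).1 = (β j).2 ∨ φ (γ j).1 = (γ j).2) ↔
    (∃ c : Fin m ⊕ Fin n → Fin n × Bool,
      (∀ j : Fin m, c (Sum.inl j) ∈ ({α j, β j, γ j} : Set (Fin n × Bool))) ∧
      (∀ i : Fin n, c (Sum.inr i) ∈ ({(i, true), (i, false)} : Set (Fin n × Bool))) ∧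
      ∀ u v, (completeBipartiteGraph (Fin m) (Fin n)).Adj u v → c u ≠ c v) :=
  threeSat_iff_list_colouring_general n m α β γ
end

section
/- For every integer t ≥ 1, there exist a bidirected tree T and a set R of requests in T such that ω(R,T) = 2t and χ(R,T) = ⌈5t/2⌉, where ω(R,T) and χ(R,T) are the clique number and chromatic number of the interference graph I(R,T). (Such an example is given by the bidirected tree on vertices {a,b,c,d} with edges ab, bc, bd, and R consisting of t copies of each of the requests (a,b), (b,c), (d,b), (b,a) and (c,b,d); its interference graph is the lexicographic product C_5[K_t].) -/
open SimpleGraph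

variable {V : Type*}

/-!
In the star with centre `b` and leaves `a`, `c`, `d`, the requests `(a,b)`, `(b,c)`, `(d,b)`,
`(b,a)`, `(c,b,d)` interfere exactly when they are equal or cyclically consecutive in this order,
so `t` copies of each give the interference graph `C₅[K_t]`. A clique of `C₅[K_t]` projects to a
clique of `C₅`, hence `ω = 2t`. A colour class projects injectively to an independent set of
`C₅`, which has at most two vertices, hence `χ ≥ 5t/2`; conversely, colouring the copies of the
`i`-th request by `i·t, …, i·t + t - 1` modulo `⌈5t/2⌉` is proper.
-/

open Finset

namespace SimpleGraph

section Blowup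

variable {α β : Type*} {G : SimpleGraph α}

/-- The lexicographic product `G[K_β]`. -/
def blowup (G : SimpleGraph α) (β : Type*) : SimpleGraph (α × β) where
  Adj p q := p ≠ q ∧ (p.1 = q.1 ∨ G.Adj p.1 q.1)
  symm := ⟨fun _ _ h => ⟨h.1.symm, h.2.imp Eq.symm fun h => h.symm⟩⟩
  loopless := ⟨fun _ h => h.1 rfl⟩

lemma IsClique.blowup_product [DecidableEq α] [DecidableEq β] {s : Finset α}
    (hs : G.IsClique (s : Set α)) (u : Finset β) :
    (G.blowup β).IsClique (s ×ˢ u : Finset (α × β)) :=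
  fun _ hp _ hq hpq =>
    ⟨hpq, or_iff_not_imp_left.2 (hs (mem_product.1 hp).1 (mem_product.1 hq).1)⟩

lemma IsClique.image_fst [DecidableEq α] {s : Finset (α × β)}
    (hs : (G.blowup β).IsClique (s : Set (α × β))) :
    G.IsClique (s.image Prod.fst : Set α) := by
  simp only [coe_image]
  rintro _ ⟨p, hp, rfl⟩ _ ⟨q, hq, rfl⟩ hpq
  exact (hs hp hq fun h => hpq (h ▸ rfl)).2.resolve_left hpq

lemma IsIndepSet.injOn_fst {s : Set (α × β)} (hs : (G.blowup β).IsIndepSet s) :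
    s.InjOn Prod.fst := fun _ hp _ hq h => by_contra fun hpq => hs hp hq hpq ⟨hpq, .inl h⟩

lemma IsIndepSet.image_fst {s : Set (α × β)} (hs : (G.blowup β).IsIndepSet s) :
    G.IsIndepSet (Prod.fst '' s) := by
  rintro _ ⟨p, hp, rfl⟩ _ ⟨q, hq, rfl⟩ hpq hadj
  exact hs hp hq (fun h => hpq (h ▸ rfl)) ⟨fun h => hpq (h ▸ rfl), .inr hadj⟩

theorem cliqueNum_blowup [Fintype α] [Fintype β] :
    (G.blowup β).cliqueNum = G.cliqueNum * Fintype.card β := by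
  classical
  apply le_antisymm
  · obtain ⟨s, hs⟩ := (G.blowup β).exists_isNClique_cliqueNum
    calc (G.blowup β).cliqueNum = #s := hs.card_eq.symm
      _ ≤ #(s.image Prod.fst ×ˢ univ) :=
        card_le_card fun p hp => mem_product.2 ⟨mem_image_of_mem _ hp, mem_univ _⟩
      _ = #(s.image Prod.fst) * Fintype.card β := by rw [card_product, card_univ]
      _ ≤ G.cliqueNum * Fintype.card β :=
        Nat.mul_le_mul_right _ hs.isClique.image_fst.card_le_cliqueNum
  · obtain ⟨s, hs⟩ := G.exists_isNClique_cliqueNum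
    calc G.cliqueNum * Fintype.card β = #(s ×ˢ (univ : Finset β)) := by
          rw [card_product, card_univ, hs.card_eq]
      _ ≤ (G.blowup β).cliqueNum := (hs.isClique.blowup_product univ).card_le_cliqueNum

theorem indepNum_blowup_le [Finite α] [Finite β] : (G.blowup β).indepNum ≤ G.indepNum := by
  classical
  obtain ⟨s, hs⟩ := (G.blowup β).exists_isNIndepSet_indepNum
  have hfst : G.IsIndepSet (s.image Prod.fst : Set α) := by
    rw [coe_image]
    exact hs.isIndepSet.image_fst
  calc (G.blowup β).indepNum = #s := hs.card_eq.symm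
    _ = #(s.image Prod.fst) := (card_image_of_injOn hs.isIndepSet.injOn_fst).symm
    _ ≤ G.indepNum := hfst.card_le_indepNum

end Blowup

theorem Coloring.card_le_indepNum_mul {α : Type*} [Fintype V] [Fintype α] {G : SimpleGraph V}
    (C : G.Coloring α) : Fintype.card V ≤ G.indepNum * Fintype.card α := by
  classical
  calc Fintype.card V = #(univ : Finset V) := card_univ.symm
    _ ≤ G.indepNum * #(univ.image C) := card_le_mul_card_image _ _ fun c _ =>
        IsIndepSet.card_le_indepNum fun v hv w hw => by
          simp only [coe_filter, mem_univ, true_and, Set.mem_ofPred_eq] at hv hw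
          exact C.isIndepSet_colorClass c hv hw
    _ ≤ G.indepNum * Fintype.card α := Nat.mul_le_mul_left _ (card_le_univ _)

lemma cliqueNum_cycleGraph_five : (cycleGraph 5).cliqueNum = 2 := by
  apply le_antisymm
  · obtain ⟨s, hs⟩ := (cycleGraph 5).exists_isNClique_cliqueNum
    have hle : ∀ s : Finset (Fin 5), (cycleGraph 5).IsClique (s : Set (Fin 5)) → #s ≤ 2 :=
      by decide
    exact hs.card_eq ▸ hle s hs.isClique
  · have : (cycleGraph 5).IsClique ({0, 1} : Finset (Fin 5)) := by decide
    exact this.card_le_cliqueNum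

lemma indepNum_cycleGraph_five : (cycleGraph 5).indepNum = 2 := by
  apply le_antisymm
  · obtain ⟨s, hs⟩ := (cycleGraph 5).exists_isNIndepSet_indepNum
    have hle : ∀ s : Finset (Fin 5), (cycleGraph 5).IsIndepSet (s : Set (Fin 5)) → #s ≤ 2 :=
      by decide
    exact hs.card_eq ▸ hle s hs.isIndepSet
  · have : (cycleGraph 5).IsIndepSet ({0, 2} : Finset (Fin 5)) := by decide
    exact this.card_le_indepNum

lemma colorable_blowup_cycleGraph_five (t : ℕ) :
    ((cycleGraph 5).blowup (Fin t)).Colorable ((5 * t + 1) / 2) := by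
  generalize hn : (5 * t + 1) / 2 = n
  have hmod : ∀ a < 2 * n, a % n = if a < n then a else a - n := fun a ha => by
    split_ifs with h
    · exact Nat.mod_eq_of_lt h
    · rw [Nat.mod_eq_sub_mod (not_lt.1 h), Nat.mod_eq_of_lt (by omega)]
  have hlt : ∀ p : Fin 5 × Fin t, p.1 * t + p.2 < 2 * n := fun p => by
    have := Nat.mul_le_mul_right t (Nat.le_of_lt_succ p.1.isLt)
    omega
  refine ⟨Coloring.mk
    (fun p => ⟨(p.1 * t + p.2) % n, Nat.mod_lt _ (by have := p.2.isLt; omega)⟩) ?_⟩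
  rintro ⟨i, k⟩ ⟨j, l⟩ ⟨hne, hij⟩
  simp only [ne_eq, Fin.mk.injEq]
  rw [hmod _ (hlt (i, k)), hmod _ (hlt (j, l))]
  simp only [ne_eq, Prod.mk.injEq, Fin.ext_iff] at hne
  rw [cycleGraph_adj] at hij
  have := k.isLt
  have := l.isLt
  -- `2t ≤ n` separates the colour blocks of `i` and `i + 1`,
  -- and `5t ≤ 2n ≤ 6t` those of `4` and `0`.
  fin_cases i <;> fin_cases j <;> simp +decide at hij hne ⊢ <;> split_ifs <;> omega

theorem chromaticNumber_blowup_cycleGraph_five (t : ℕ) :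
    ((cycleGraph 5).blowup (Fin t)).chromaticNumber = ((5 * t + 1) / 2 : ℕ) := by
  refine le_antisymm (colorable_blowup_cycleGraph_five t).chromaticNumber_le
    (le_chromaticNumber_iff_colorable.2 fun m ⟨C⟩ => ?_)
  have hcard := C.card_le_indepNum_mul
  have hindep := (indepNum_blowup_le (G := cycleGraph 5) (β := Fin t)).trans_eq
    indepNum_cycleGraph_five
  simp only [Fintype.card_prod, Fintype.card_fin] at hcard
  have := Nat.mul_le_mul_right m hindep
  omega

section StarPath

variable [DecidableEq V]

def Walk.toStarCenter (r u : V) : (starGraph r).Walk u r :=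
  if h : u = r then h ▸ Walk.nil else .cons (starGraph_center_adj' (Ne.symm h)) .nil

def starPath (r u v : V) : (starGraph r).Walk u v :=
  ((Walk.toStarCenter r u).append (Walk.toStarCenter r v).reverse).bypass

lemma isPath_starPath (r u v : V) : (starPath r u v).IsPath := Walk.bypass_isPath _

end StarPath

end SimpleGraph

lemma interferesOn_iff_of_isPath {T : SimpleGraph V} (hT : T.IsAcyclic) {r r' : Request T}
    (p : T.Walk r.s r'.t) (hp : p.IsPath) :
    InterferesOn T r r' ↔
      1 ≤ p.length ∧ p.getVert 1 = r.sPlus ∧ p.getVert (p.length - 1) = r'.tMinus := by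
  refine ⟨fun ⟨q, hq, h⟩ => ?_, fun h => ⟨p, hp, h⟩⟩
  obtain rfl : q = p :=
    congrArg Subtype.val ((hT.subsingleton_path _ _).elim ⟨q, hq⟩ ⟨p, hp⟩)
  exact h

lemma interferenceGraph_comp_fst_eq_blowup {T : SimpleGraph V} {α β : Type*}
    {f : α → Request T} {G : SimpleGraph α}
    (hf : ∀ i j, Interfere T (f i) (f j) ↔ i = j ∨ G.Adj i j) :
    interferenceGraph T (fun p : α × β => f p.1) = G.blowup β := by
  ext p q
  exact and_congr_right fun _ => hf p.1 q.1

section Star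

variable [DecidableEq V]

def starRequest (r u v : V) (h : u ≠ v) : Request (starGraph r) :=
  ⟨u, v, starPath r u v, isPath_starPath r u v,
    Nat.one_le_iff_ne_zero.2 fun h0 => h (Walk.eq_of_length_eq_zero h0)⟩

lemma interferesOn_starRequest_iff {r u v u' v' : V} (h : u ≠ v) (h' : u' ≠ v') :
    InterferesOn (starGraph r) (starRequest r u v h) (starRequest r u' v' h') ↔
      1 ≤ (starPath r u v').length ∧
        (starPath r u v').getVert 1 = (starRequest r u v h).sPlus ∧
        (starPath r u v').getVert ((starPath r u v').length - 1) =
          (starRequest r u' v' h').tMinus :=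
  interferesOn_iff_of_isPath (isAcyclic_starGraph r) _ (isPath_starPath r u v')

end Star

/-- The requests `(a,b)`, `(b,c)`, `(d,b)`, `(b,a)`, `(c,b,d)`, with `a, b, c, d = 0, 1, 2, 3`. -/
def pentagonRequest (i : Fin 5) : Request (starGraph (1 : Fin 4)) :=
  starRequest 1 (![0, 1, 3, 1, 2] i) (![1, 2, 1, 0, 3] i) (by fin_cases i <;> decide)

lemma interfere_pentagonRequest_iff (i j : Fin 5) :
    Interfere (starGraph 1) (pentagonRequest i) (pentagonRequest j) ↔
      i = j ∨ (cycleGraph 5).Adj i j := by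
  simp only [Interfere, pentagonRequest, interferesOn_starRequest_iff]
  revert i j
  decide

open SimpleGraph in
theorem exists_omega_two_t_chi_ceil_five_t_half_general (t : ℕ) :
    ∃ (V : Type) (T : SimpleGraph V) (ι : Type) (_ : Fintype ι)
      (f : ι → Request T),
      T.IsTree ∧
      (interferenceGraph T f).cliqueNum = 2 * t ∧
      (interferenceGraph T f).chromaticNumber = ((5 * t + 1) / 2 : ℕ) := by
  refine ⟨Fin 4, starGraph 1, Fin 5 × Fin t, inferInstance, fun p => pentagonRequest p.1,
    isTree_starGraph 1, ?_⟩
  rw [interferenceGraph_comp_fst_eq_blowup interfere_pentagonRequest_iff, cliqueNum_blowup,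
    cliqueNum_cycleGraph_five, Fintype.card_fin]
  exact ⟨rfl, chromaticNumber_blowup_cycleGraph_five t⟩

open SimpleGraph in
/-- For every `t ≥ 1` there are a bidirected tree `T` and a (multi)set `R` of
requests in `T`, indexed by a finite type, with `ω(R,T) = 2t` and
`χ(R,T) = ⌈5t/2⌉`. -/
theorem exists_omega_two_t_chi_ceil_five_t_half (t : ℕ) (ht : 1 ≤ t) :
    ∃ (V : Type) (T : SimpleGraph V) (ι : Type) (_ : Fintype ι)
      (f : ι → Request T),
      T.IsTree ∧
      (interferenceGraph T f).cliqueNum = 2 * t ∧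
      (interferenceGraph T f).chromaticNumber = ((5 * t + 1) / 2 : ℕ) :=
  exists_omega_two_t_chi_ceil_five_t_half_general t
end
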